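/- arXiv:1805.08433 — 7 statements merged into one kernel-verified Lean document; each statement's English description precedes it below -/
import Mathlib

section
/- The algebraic Godbillon–Vey cochain Ψ is a 3-cocycle of the Witt algebra W with values in the trivial module K (δ_3 Ψ = 0), and Ψ is not a 3-coboundary; hence Ψ defines a non-trivial class in H^3(W, K). -/
/-- `e : ℤ → W` is a basis of `W` realizing `W` as the Witt algebra over `K`:
the `e n` form a `K`-basis and `⁅e n, e m⁆ = (m - n) • e (n + m)`. -/
def IsWittAlgebra (K : Type*) {W : Type*} [Field K] [LieRing W] [LieAlgebra K W]
    (e : ℤ → W) : Prop :=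
  (∃ b : Module.Basis ℤ K W, ∀ n : ℤ, b n = e n) ∧
    ∀ n m : ℤ, ⁅e n, e m⁆ = (m - n) • e (n + m)

/-- The Chevalley–Eilenberg coboundary of a 2-cochain with values in the trivial module. -/
def lieD2 (K : Type*) {L : Type*} [Field K] [LieRing L] [LieAlgebra K L]
    (φ : AlternatingMap K L K (Fin 2)) (x₁ x₂ x₃ : L) : K :=
  φ ![⁅x₁, x₂⁆, x₃] - φ ![⁅x₁, x₃⁆, x₂] + φ ![⁅x₂, x₃⁆, x₁]

/-- A 3-cochain with values in the trivial module `K` is a cocycle: `δ₃ ψ = 0`. -/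
def IsLieCocycle3 (K : Type*) {L : Type*} [Field K] [LieRing L] [LieAlgebra K L]
    (ψ : AlternatingMap K L K (Fin 3)) : Prop :=
  ∀ x₁ x₂ x₃ x₄ : L,
    ψ ![⁅x₁, x₂⁆, x₃, x₄] - ψ ![⁅x₁, x₃⁆, x₂, x₄] + ψ ![⁅x₁, x₄⁆, x₂, x₃]
      + ψ ![⁅x₂, x₃⁆, x₁, x₄] - ψ ![⁅x₂, x₄⁆, x₁, x₃] + ψ ![⁅x₃, x₄⁆, x₁, x₂] = 0

/-- A 3-cochain with values in the trivial module `K` is a coboundary: `ψ = δ₂ φ`. -/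
def IsLieCoboundary3 (K : Type*) {L : Type*} [Field K] [LieRing L] [LieAlgebra K L]
    (ψ : AlternatingMap K L K (Fin 3)) : Prop :=
  ∃ φ : AlternatingMap K L K (Fin 2), ∀ x₁ x₂ x₃ : L,
    ψ ![x₁, x₂, x₃] = lieD2 K φ x₁ x₂ x₃

/-!
`δ₃Ψ` is multilinear, so the cocycle identity only has to be checked on basis vectors
`e a, e b, e c, e d`, where it is a polynomial identity in `a, b, c, d` on the hyperplane
`a + b + c + d = 0`.

If `Ψ = δ₂φ`, then on a basis triple with `i + j + k = 0` the value of `δ₂φ` is a combination,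
with coefficients linear in `i, j, k`, of the numbers `φ(e n, e (-n))`, which are odd in `n`;
`Ψ` instead is cubic. On the triples `(2, 1, -3)` and `(3, -1, -2)` the two values of `δ₂φ`
cancel while `Ψ` takes the value `20` twice, so `40 = 0`.
-/

namespace AlternatingMap

section Slots

variable {R M N : Type*} [CommSemiring R] [AddCommMonoid M] [Module R M] [AddCommMonoid N]
  [Module R N] (f : M [⋀^Fin 3]→ₗ[R] N) (a b x y : M) (r : R)

theorem map_vec₃_add_fst : f ![x + y, a, b] = f ![x, a, b] + f ![y, a, b] :=
  f.map_vecCons_add ![a, b] x y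

theorem map_vec₃_add_snd : f ![a, x + y, b] = f ![a, x, b] + f ![a, y, b] :=
  (f.curryLeft a).map_vecCons_add ![b] x y

theorem map_vec₃_add_thd : f ![a, b, x + y] = f ![a, b, x] + f ![a, b, y] :=
  ((f.curryLeft a).curryLeft b).map_vecCons_add ![] x y

theorem map_vec₃_smul_fst : f ![r • x, a, b] = r • f ![x, a, b] :=
  f.map_vecCons_smul ![a, b] r x

theorem map_vec₃_smul_snd : f ![a, r • x, b] = r • f ![a, x, b] :=
  (f.curryLeft a).map_vecCons_smul ![b] r x

theorem map_vec₃_smul_thd : f ![a, b, r • x] = r • f ![a, b, x] :=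
  ((f.curryLeft a).curryLeft b).map_vecCons_smul ![] r x

end Slots

theorem map_vecCons_zsmul {R M N : Type*} [Ring R] [AddCommGroup M] [Module R M]
    [AddCommGroup N] [Module R N] {n : ℕ} (f : M [⋀^Fin n.succ]→ₗ[R] N) (m : Fin n → M)
    (z : ℤ) (x : M) : f (Matrix.vecCons (z • x) m) = z • f (Matrix.vecCons x m) := by
  rw [← Int.cast_smul_eq_zsmul R, f.map_vecCons_smul, Int.cast_smul_eq_zsmul]

theorem map_vec₂_swap {R M N : Type*} [Semiring R] [AddCommMonoid M] [Module R M]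
    [AddCommGroup N] [Module R N] (f : M [⋀^Fin 2]→ₗ[R] N) (x y : M) :
    f ![x, y] = -f ![y, x] := by
  rw [← f.map_swap ![y, x] (i := 0) (j := 1) (by decide)]
  congr 1
  ext i
  fin_cases i <;> rfl

end AlternatingMap

section Multilinear

variable {R M N : Type*} [Semiring R] [AddCommMonoid M] [Module R M] [AddCommMonoid N]
  [Module R N] {ι : Type*} {v : ι → M}

theorem IsLinearMap.eq_zero_of_span_eq_top (hv : Submodule.span R (Set.range v) = ⊤)
    {f : M → N} (hf : IsLinearMap R f) (h : ∀ i, f (v i) = 0) (x : M) : f x = 0 :=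
  LinearMap.congr_fun (LinearMap.ext_on_range hv (f := hf.mk' f) (g := 0) h) x

theorem eq_zero_of_isLinearMap₄_of_span_eq_top (hv : Submodule.span R (Set.range v) = ⊤)
    {F : M → M → M → M → N}
    (h₁ : ∀ y z w, IsLinearMap R (F · y z w)) (h₂ : ∀ x z w, IsLinearMap R (F x · z w))
    (h₃ : ∀ x y w, IsLinearMap R (F x y · w)) (h₄ : ∀ x y z, IsLinearMap R (F x y z ·))
    (h : ∀ a b c d, F (v a) (v b) (v c) (v d) = 0) (x y z w : M) : F x y z w = 0 := by
  refine (h₁ y z w).eq_zero_of_span_eq_top hv (fun a ↦ ?_) x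
  refine (h₂ (v a) z w).eq_zero_of_span_eq_top hv (fun b ↦ ?_) y
  refine (h₃ (v a) (v b) w).eq_zero_of_span_eq_top hv (fun c ↦ ?_) z
  exact (h₄ (v a) (v b) (v c)).eq_zero_of_span_eq_top hv (h a b c) w

end Multilinear

section LieCohomology

variable {K L : Type*} [Field K] [LieRing L] [LieAlgebra K L]

variable (K) in
def lieD3 (ψ : AlternatingMap K L K (Fin 3)) (x₁ x₂ x₃ x₄ : L) : K :=
  ψ ![⁅x₁, x₂⁆, x₃, x₄] - ψ ![⁅x₁, x₃⁆, x₂, x₄] + ψ ![⁅x₁, x₄⁆, x₂, x₃]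
    + ψ ![⁅x₂, x₃⁆, x₁, x₄] - ψ ![⁅x₂, x₄⁆, x₁, x₃] + ψ ![⁅x₃, x₄⁆, x₁, x₂]

theorem isLieCocycle3_of_span_eq_top {ι : Type*} {v : ι → L}
    (hv : Submodule.span K (Set.range v) = ⊤) {ψ : AlternatingMap K L K (Fin 3)}
    (h : ∀ a b c d, lieD3 K ψ (v a) (v b) (v c) (v d) = 0) : IsLieCocycle3 K ψ := by
  refine eq_zero_of_isLinearMap₄_of_span_eq_top hv (F := lieD3 K ψ) ?_ ?_ ?_ ?_ h <;>
    refine fun _ _ _ ↦ ⟨fun _ _ ↦ ?_, fun _ _ ↦ ?_⟩ <;>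
    simp only [lieD3, add_lie, lie_add, smul_lie, lie_smul, ψ.map_vec₃_add_fst,
      ψ.map_vec₃_add_snd, ψ.map_vec₃_add_thd, ψ.map_vec₃_smul_fst, ψ.map_vec₃_smul_snd,
      ψ.map_vec₃_smul_thd, smul_eq_mul] <;>
    ring

end LieCohomology

section Witt

variable {K W : Type*} [Field K] [LieRing W] [LieAlgebra K W] {e : ℤ → W}

theorem godbillonVey_lieD3_basis_eq_zero
    (he : ∀ n m : ℤ, ⁅e n, e m⁆ = (m - n) • e (n + m)) {Ψ : AlternatingMap K W K (Fin 3)}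
    (hΨ : ∀ i j k : ℤ, Ψ ![e i, e j, e k] =
      if i + j + k = 0 then (((i - j) * (j - k) * (i - k) : ℤ) : K) else 0)
    (a b c d : ℤ) : lieD3 K Ψ (e a) (e b) (e c) (e d) = 0 := by
  simp only [lieD3, he, Ψ.map_vecCons_zsmul, hΨ, zsmul_eq_mul]
  by_cases hs : a + b + c + d = 0
  · rw [if_pos (by omega), if_pos (by omega), if_pos (by omega), if_pos (by omega),
      if_pos (by omega), if_pos (by omega)]
    obtain rfl : d = -a - b - c := by omega
    push_cast
    ring
  · rw [if_neg (by omega), if_neg (by omega), if_neg (by omega), if_neg (by omega),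
      if_neg (by omega), if_neg (by omega)]
    ring

theorem lieD2_witt_basis (he : ∀ n m : ℤ, ⁅e n, e m⁆ = (m - n) • e (n + m))
    (φ : AlternatingMap K W K (Fin 2)) {i j k : ℤ} (h : i + j + k = 0) :
    lieD2 K φ (e i) (e j) (e k) = ((k - i : ℤ) : K) * φ ![e j, e (-j)]
      - ((j - i : ℤ) : K) * φ ![e k, e (-k)] - ((k - j : ℤ) : K) * φ ![e i, e (-i)] := by
  rw [lieD2, he, he, he, show i + j = -k by omega, show i + k = -j by omega,
    show j + k = -i by omega, φ.map_vecCons_zsmul, φ.map_vecCons_zsmul, φ.map_vecCons_zsmul,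
    φ.map_vec₂_swap (e (-k)), φ.map_vec₂_swap (e (-j)), φ.map_vec₂_swap (e (-i))]
  simp only [zsmul_eq_mul]
  ring

end Witt

/-- the algebraic Godbillon–Vey cochain `Ψ` is a 3-cocycle of the Witt
algebra with values in the trivial module `K`, and it is not a 3-coboundary. -/
theorem godbillonVey_isCocycle_not_coboundary
    {K W : Type*} [Field K] [CharZero K] [LieRing W] [LieAlgebra K W]
    (e : ℤ → W) (hW : IsWittAlgebra K e)
    (Ψ : AlternatingMap K W K (Fin 3))
    (hΨ : ∀ i j k : ℤ, Ψ ![e i, e j, e k] =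
      if i + j + k = 0 then (((i - j) * (j - k) * (i - k) : ℤ) : K) else 0) :
    IsLieCocycle3 K Ψ ∧ ¬ IsLieCoboundary3 K Ψ := by
  obtain ⟨⟨b, hb⟩, he⟩ := hW
  have hspan : Submodule.span K (Set.range e) = ⊤ := by
    rw [← funext hb]
    exact b.span_eq
  refine ⟨isLieCocycle3_of_span_eq_top hspan (godbillonVey_lieD3_basis_eq_zero he hΨ), ?_⟩
  rintro ⟨φ, hφ⟩
  have h₁ := hφ (e 2) (e 1) (e (-3))
  have h₂ := hφ (e 3) (e (-1)) (e (-2))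
  rw [hΨ, lieD2_witt_basis he φ (by norm_num)] at h₁ h₂
  norm_num at h₁ h₂
  have h₄₀ : (40 : K) = 0 := by
    linear_combination h₁ + h₂ - 5 * φ.map_vec₂_swap (e 1) (e (-1))
      + 4 * φ.map_vec₂_swap (e 2) (e (-2)) + φ.map_vec₂_swap (e 3) (e (-3))
  norm_num at h₄₀
end

section
/- Let ψ' be a 3-cocycle of the Witt algebra W with values in the trivial module K that is homogeneous of degree zero and satisfies ψ'(e_1, e_{−1}, e_0) = 0. Then there exists a 2-cochain φ of W with values in K such that the cohomologous cocycle ψ = ψ' − δ_2 φ satisfies ψ(e_i, e_j, e_1) = 0 for all i, j ∈ ℤ. -/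
/-!
Only the degree-zero part `g a = φ (e a, e (-a))` of the 2-cochain matters, and for odd `g`
with `g 1 = 0` the required identities reduce to the recurrence
`(i - 1) g (i + 1) = (i + 2) g i + f i`, where `f i = ψ' (e i, e (-1 - i), e 1)`. Alternation
gives `f (-1 - i) = -f i`, which makes the recurrence at `-1 - i` equivalent to the one at `i`,
and `f 1 = 0`, which is all the recurrence asks at `i = 1`; the hypothesis
`ψ' (e 1, e (-1), e 0) = 0` is `f 0 = 0`, the condition at `i = 0`. For `i ≥ 2` the recurrence
is solved by variation of constants.
-/

namespace AlternatingMap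

variable {R M N : Type*} [CommRing R] [AddCommGroup M] [Module R M] [AddCommGroup N] [Module R N]

theorem map_vec3_swap_left (ψ : M [⋀^Fin 3]→ₗ[R] N) (x y z : M) :
    ψ ![y, x, z] = -ψ ![x, y, z] := by
  rw [← ψ.map_swap ![x, y, z] (show (0 : Fin 3) ≠ 1 by decide)]
  congr 1
  ext k
  fin_cases k <;> rfl

theorem map_vec3_swap_outer (ψ : M [⋀^Fin 3]→ₗ[R] N) (x y z : M) :
    ψ ![z, y, x] = -ψ ![x, y, z] := by
  rw [← ψ.map_swap ![x, y, z] (show (0 : Fin 3) ≠ 2 by decide)]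
  congr 1
  ext k
  fin_cases k <;> rfl

end AlternatingMap

theorem Module.Basis.exists_alternatingMap_fin_two_apply {R M N ι : Type*} [CommRing R]
    [AddCommGroup M] [Module R M] [AddCommGroup N] [Module R N] [LinearOrder ι]
    (b : Module.Basis ι R M) (h : ι → ι → N) (h_skew : ∀ a c, h c a = -h a c)
    (h_diag : ∀ a, h a a = 0) :
    ∃ φ : M [⋀^Fin 2]→ₗ[R] N, ∀ a c, φ ![b a, b c] = h a c := by
  -- `a < c` picks one value out of each skew pair, so no division by `2` is needed
  let upper : ι → ι → N := fun a c => if a < c then h a c else 0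
  let F : M →ₗ[R] M [⋀^Fin 1]→ₗ[R] N :=
    b.constr R fun a => AlternatingMap.ofSubsingleton R M N 0 (b.constr R (upper a))
  refine ⟨AlternatingMap.alternatizeUncurryFin F, fun a c => ?_⟩
  have : AlternatingMap.alternatizeUncurryFin F ![b a, b c] = upper a c - upper c a := by
    simp [AlternatingMap.alternatizeUncurryFin_apply, F, Fin.removeNth_apply, sub_eq_add_neg]
  rw [this]
  rcases lt_trichotomy a c with hac | rfl | hac
  · simp [upper, hac, hac.not_gt]
  · simp [upper, h_diag]
  · simp [upper, hac, hac.not_gt, h_skew c a]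

section Recurrence

variable {K : Type*} [Field K] (f : ℤ → K)

/-- Variation of constants: `n ^ 3 - n` solves the homogeneous recurrence
`(n - 1) g (n + 1) = (n + 2) g n`. -/
def wittLevelOneSolution (n : ℤ) : K :=
  ((n : K) ^ 3 - n) * ∑ k ∈ Finset.Ico 2 n.natAbs, f k / (((k : K) - 1) * k * (k + 1) * (k + 2))

theorem wittLevelOneSolution_neg (n : ℤ) :
    wittLevelOneSolution f (-n) = -wittLevelOneSolution f n := by
  simp only [wittLevelOneSolution, Int.natAbs_neg, Int.cast_neg]
  ring

variable [CharZero K]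

theorem wittLevelOneSolution_natCast_recurrence {m : ℕ} (hm : 2 ≤ m) :
    ((m : K) - 1) * wittLevelOneSolution f (m + 1) =
      (m + 2) * wittLevelOneSolution f m + f m := by
  have hd : ((m : K) - 1) * m * (m + 1) * (m + 2) ≠ 0 := by
    have hm1 : (m : K) - 1 ≠ 0 := sub_ne_zero.2 (by exact_mod_cast (by omega : m ≠ 1))
    have hm0 : (m : K) ≠ 0 := by exact_mod_cast (by omega : m ≠ 0)
    exact mul_ne_zero (mul_ne_zero (mul_ne_zero hm1 hm0) (by norm_cast)) (by norm_cast)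
  simp only [wittLevelOneSolution, Int.natAbs_natCast, show ((m : ℤ) + 1).natAbs = m + 1 by omega,
    Finset.sum_Ico_succ_top hm, Int.cast_add, Int.cast_natCast, Int.cast_one]
  linear_combination f m * div_self hd

theorem wittLevelOneSolution_recurrence (hf : ∀ i, f (-1 - i) = -f i) (hf0 : f 0 = 0)
    (hf1 : f 1 = 0) (i : ℤ) :
    ((i : K) - 1) * wittLevelOneSolution f (i + 1) =
      (i + 2) * wittLevelOneSolution f i + f i := by
  have hnat : ∀ m : ℕ, ((m : K) - 1) * wittLevelOneSolution f (m + 1) =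
      (m + 2) * wittLevelOneSolution f m + f m := by
    intro m
    rcases m with _ | _ | m
    · simp [wittLevelOneSolution, hf0]
    · simp [wittLevelOneSolution, hf1]
    · exact wittLevelOneSolution_natCast_recurrence f (by omega)
  rcases le_or_gt 0 i with hi | hi
  · lift i to ℕ using hi
    exact_mod_cast hnat i
  obtain ⟨m, rfl⟩ : ∃ m : ℕ, i = -1 - m := ⟨(-1 - i).toNat, by omega⟩
  have hg := wittLevelOneSolution_neg f
  rw [show -1 - (m : ℤ) + 1 = -m by ring, show -1 - (m : ℤ) = -(m + 1) by ring, hg, hg,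
    ← show -1 - (m : ℤ) = -(m + 1) by ring, hf]
  push_cast
  linear_combination -hnat m

end Recurrence

section Witt

variable {K W : Type*} [Field K] [LieRing W] [LieAlgebra K W] {e : ℤ → W}

theorem lieD2_witt_apply_one (hbr : ∀ n m : ℤ, ⁅e n, e m⁆ = (m - n) • e (n + m))
    (φ : W [⋀^Fin 2]→ₗ[K] K) (g : ℤ → K)
    (hφ : ∀ a c, φ ![e a, e c] = if a + c = 0 then g a else 0) (hg : ∀ n, g (-n) = -g n)
    (hg1 : g 1 = 0) (i j : ℤ) :
    lieD2 K φ (e i) (e j) (e 1) =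
      if i + j + 1 = 0 then ((i : K) - 1) * g (i + 1) - (i + 2) * g i else 0 := by
  simp only [lieD2, hbr, ← Int.cast_smul_eq_zsmul K, AlternatingMap.map_vecCons_smul, hφ,
    smul_eq_mul]
  by_cases h : i + j + 1 = 0
  · obtain rfl : j = -1 - i := by omega
    rw [if_pos h, if_pos h, if_pos (by omega), if_pos (by omega), show i + (-1 - i) = -1 by ring,
      show -1 - i + 1 = -i by ring, hg, hg, hg1]
    push_cast
    ring
  · rw [if_neg h, if_neg h, if_neg (by omega), if_neg (by omega)]
    ring

theorem IsWittAlgebra.exists_lieD2_apply_one (hW : IsWittAlgebra K e) (g : ℤ → K)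
    (hg : ∀ n, g (-n) = -g n) (hg0 : g 0 = 0) (hg1 : g 1 = 0) :
    ∃ φ : W [⋀^Fin 2]→ₗ[K] K, ∀ i j : ℤ, lieD2 K φ (e i) (e j) (e 1) =
      if i + j + 1 = 0 then ((i : K) - 1) * g (i + 1) - (i + 2) * g i else 0 := by
  obtain ⟨⟨b, hb⟩, hbr⟩ := hW
  have h_skew : ∀ a c : ℤ,
      (if c + a = 0 then g c else 0) = -if a + c = 0 then g a else 0 := by
    intro a c
    by_cases hac : a + c = 0
    · rw [if_pos (by omega), if_pos hac, show c = -a by omega, hg]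
    · rw [if_neg (by omega), if_neg hac, neg_zero]
  have h_diag : ∀ a : ℤ, (if a + a = 0 then g a else 0) = 0 := by
    intro a
    split_ifs with ha
    · rw [show a = 0 by omega, hg0]
    · rfl
  obtain ⟨φ, hφ⟩ := b.exists_alternatingMap_fin_two_apply _ h_skew h_diag
  exact ⟨φ, lieD2_witt_apply_one hbr φ g (by simpa [hb] using hφ) hg hg1⟩

end Witt

theorem witt_cocycle_normalize_level_one_general
    {K W : Type*} [Field K] [CharZero K] [LieRing W] [LieAlgebra K W]
    (e : ℤ → W) (hW : IsWittAlgebra K e)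
    (ψ' : AlternatingMap K W K (Fin 3))
    (hdeg : ∀ i j k : ℤ, i + j + k ≠ 0 → ψ' ![e i, e j, e k] = 0)
    (h0 : ψ' ![e 1, e (-1), e 0] = 0) :
    ∃ φ : AlternatingMap K W K (Fin 2), ∀ i j : ℤ,
      ψ' ![e i, e j, e 1] - lieD2 K φ (e i) (e j) (e 1) = 0 := by
  set f : ℤ → K := fun i => ψ' ![e i, e (-1 - i), e 1]
  have hf_skew : ∀ i, f (-1 - i) = -f i := fun i => by
    simpa [f] using ψ'.map_vec3_swap_left (e i) (e (-1 - i)) (e 1)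
  have hf0 : f 0 = 0 := by simpa [f, h0] using ψ'.map_vec3_swap_outer (e 1) (e (-1)) (e 0)
  have hf1 : f 1 = 0 := ψ'.map_eq_zero_of_eq _ (i := 0) (j := 2) rfl (by decide)
  obtain ⟨φ, hφ⟩ := hW.exists_lieD2_apply_one (wittLevelOneSolution f)
    (wittLevelOneSolution_neg f) (by simp [wittLevelOneSolution])
    (by simp [wittLevelOneSolution])
  refine ⟨φ, fun i j => ?_⟩
  rw [hφ]
  split_ifs with h
  · obtain rfl : j = -1 - i := by omega
    rw [wittLevelOneSolution_recurrence f hf_skew hf0 hf1 i]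
    ring
  · rw [hdeg i j 1 h, sub_zero]

/-- if `ψ'` is a degree-zero 3-cocycle of the Witt algebra with values in
the trivial module `K` and `ψ'(e₁, e₋₁, e₀) = 0`, then there is a 2-cochain `φ` such that
the cohomologous cocycle `ψ = ψ' - δ₂ φ` satisfies `ψ(e i, e j, e 1) = 0` for all `i, j`. -/
theorem witt_cocycle_normalize_level_one
    {K W : Type*} [Field K] [CharZero K] [LieRing W] [LieAlgebra K W]
    (e : ℤ → W) (hW : IsWittAlgebra K e)
    (ψ' : AlternatingMap K W K (Fin 3)) (hcoc : IsLieCocycle3 K ψ')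
    (hdeg : ∀ i j k : ℤ, i + j + k ≠ 0 → ψ' ![e i, e j, e k] = 0)
    (h0 : ψ' ![e 1, e (-1), e 0] = 0) :
    ∃ φ : AlternatingMap K W K (Fin 2), ∀ i j : ℤ,
      ψ' ![e i, e j, e 1] - lieD2 K φ (e i) (e j) (e 1) = 0 :=
  witt_cocycle_normalize_level_one_general e hW ψ' hdeg h0
end

section
/- Let ψ' be a 3-cocycle of the Virasoro algebra V with values in the trivial module K that is homogeneous of degree zero and satisfies ψ'(ê_1, ê_{−1}, ê_0) = 0. Then there exists a 2-cochain φ of V with values in K such that the cohomologous cocycle ψ = ψ' − δ_2 φ satisfies: ψ(ê_i, ê_j, ê_1) = 0 for all i, j ∈ ℤ, and ψ(ê_i, ê_j, t) = δ_{i,−j} · (1/6) i (i − 1)(i + 1) · ψ(ê_2, ê_{−2}, t) for all i, j ∈ ℤ. -/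
/-- `E : ℤ → V` together with the central element `t` realize `V` as the Virasoro
algebra over `K`: the `E n` together with `t` form a `K`-basis,
`⁅E n, E m⁆ = (m - n) • E (n + m) - (1/12)(n³ - n) δ_{n+m,0} • t` and `⁅E n, t⁆ = 0`. -/
def IsVirasoroAlgebra (K : Type*) {V : Type*} [Field K] [LieRing V] [LieAlgebra K V]
    (E : ℤ → V) (t : V) : Prop :=
  (∃ b : Module.Basis (Option ℤ) K V, b none = t ∧ ∀ n : ℤ, b (some n) = E n) ∧
    (∀ n m : ℤ, ⁅E n, E m⁆ = (m - n) • E (n + m) +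
      (if n + m = 0 then -((((n : K) ^ 3 - (n : K)) / 12)) else 0) • t) ∧
    ∀ n : ℤ, ⁅E n, t⁆ = 0

/-!
Everything happens on degree-zero components. A degree-zero 2-cochain `φ` with
`φ(E m, E (-m)) = a m` for an odd `a` changes `f i = ψ'(E i, E (-1 - i), E 1)` by
`(i - 1) a (i + 1) - (i + 2) a i`; since `f (-1 - i) = -f i` and `f 0 = f 1 = 0`, this first-order
recurrence can be solved on `ℕ` and extended oddly, which kills `ψ(E i, E j, E 1)`.
For the central components, the cocycle identity on `(E i, E 1, E (-1 - i), t)` gives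
`(1 - i) g (i + 1) + (2 + i) g i = (2 i + 1) g 1` for `g i = ψ(E i, E (-i), t)`. The value
`φ(E 0, t)` shifts `g i` by a multiple of `i` and is chosen to make `g 1 = 0`; the homogeneous
recurrence together with oddness of `g` then forces `g i = (i³ - i) / 6 · g 2`.
-/

namespace AlternatingMap

variable {R M N : Type*} [Semiring R] [AddCommGroup M] [Module R M] [AddCommGroup N] [Module R N]

theorem map_vecCons_zero {n : ℕ} (f : M [⋀^Fin n.succ]→ₗ[R] N) (m : Fin n → M) :
    f (Matrix.vecCons 0 m) = 0 :=
  f.map_coord_zero 0 rfl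

theorem map_fin_two_swap (f : M [⋀^Fin 2]→ₗ[R] N) (x y : M) : f ![y, x] = -f ![x, y] := by
  convert f.map_swap ![x, y] (show (0 : Fin 2) ≠ 1 by decide) using 2
  ext i; fin_cases i <;> rfl

theorem map_fin_two_self (f : M [⋀^Fin 2]→ₗ[R] N) (x : M) : f ![x, x] = 0 :=
  f.map_eq_zero_of_eq (i := 0) (j := 1) _ rfl (by decide)

theorem map_fin_three_swap₀₁ (f : M [⋀^Fin 3]→ₗ[R] N) (x y z : M) :
    f ![y, x, z] = -f ![x, y, z] := by
  convert f.map_swap ![x, y, z] (show (0 : Fin 3) ≠ 1 by decide) using 2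
  ext i; fin_cases i <;> rfl

theorem map_fin_three_swap₀₂ (f : M [⋀^Fin 3]→ₗ[R] N) (x y z : M) :
    f ![z, y, x] = -f ![x, y, z] := by
  convert f.map_swap ![x, y, z] (show (0 : Fin 3) ≠ 2 by decide) using 2
  ext i; fin_cases i <;> rfl

theorem map_fin_three_eq₀₂ (f : M [⋀^Fin 3]→ₗ[R] N) (x y : M) : f ![x, y, x] = 0 :=
  f.map_eq_zero_of_eq (i := 0) (j := 2) _ rfl (by decide)

end AlternatingMap

section Antisymmetrization

variable {R M N : Type*} [CommRing R] [AddCommGroup M] [Module R M] [AddCommGroup N] [Module R N]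

def LinearMap.alternatize₂ (F : M →ₗ[R] M →ₗ[R] N) : M [⋀^Fin 2]→ₗ[R] N :=
  AlternatingMap.alternatizeUncurryFin
    { toFun := fun x => AlternatingMap.ofSubsingleton R M N (0 : Fin 1) (F x)
      map_add' := fun x y => by ext; simp
      map_smul' := fun c x => by ext; simp }

theorem LinearMap.alternatize₂_apply (F : M →ₗ[R] M →ₗ[R] N) (x y : M) :
    F.alternatize₂ ![x, y] = F x y - F y x := by
  simp [LinearMap.alternatize₂, AlternatingMap.alternatizeUncurryFin_apply, Fin.sum_univ_two,
    Fin.removeNth, sub_eq_add_neg]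

end Antisymmetrization

theorem Module.Basis.exists_alternatingMap_fin_two_apply_basis {K V ι : Type*} [Field K]
    [NeZero (2 : K)] [AddCommGroup V] [Module K V] (b : Module.Basis ι K V) (c : ι → ι → K)
    (hc : ∀ i j, c j i = -c i j) :
    ∃ φ : V [⋀^Fin 2]→ₗ[K] K, ∀ i j, φ ![b i, b j] = c i j := by
  refine ⟨(b.constr K fun i => b.constr K fun j => c i j / 2).alternatize₂, fun i j => ?_⟩
  rw [LinearMap.alternatize₂_apply, b.constr_basis, b.constr_basis, b.constr_basis,
    b.constr_basis, hc i j, neg_div, sub_neg_eq_add, add_halves]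

section Recurrence

variable {K : Type*} [Field K]

/-- Solves `(n - 1) a (n + 1) - (n + 2) a n = f n` forward; `a 2` is free because its coefficient
vanishes at `n = 1`, and is taken to be `0`. -/
def recurrenceSolution (f : ℤ → K) : ℕ → K
  | 0 | 1 | 2 => 0
  | k + 3 => (f (k + 2) + (k + 4) * recurrenceSolution f (k + 2)) / (k + 1)

variable [CharZero K]

theorem recurrenceSolution_spec (f : ℤ → K) (hf₀ : f 0 = 0) (hf₁ : f 1 = 0) (n : ℕ) :
    ((n : K) - 1) * recurrenceSolution f (n + 1) - (n + 2) * recurrenceSolution f n = f n := by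
  match n with
  | 0 => simp [recurrenceSolution, hf₀]
  | 1 => simp [recurrenceSolution, hf₁]
  | k + 2 =>
    rw [recurrenceSolution]
    push_cast
    field_simp
    ring

theorem exists_odd_solution_recurrence (f : ℤ → K) (hf : ∀ i, f (-1 - i) = -f i) (hf₀ : f 0 = 0)
    (hf₁ : f 1 = 0) :
    ∃ a : ℤ → K, Function.Odd a ∧ ∀ i : ℤ, ((i : K) - 1) * a (i + 1) - (i + 2) * a i = f i := by
  set a : ℤ → K := fun i => i.sign * recurrenceSolution f i.natAbs
  have ha_odd : Function.Odd a := fun i => by simp [a]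
  have ha_nat (n : ℕ) : a n = recurrenceSolution f n := by
    simp only [a, Int.natAbs_natCast]
    rcases n with _ | n
    · simp [recurrenceSolution]
    · rw [Int.sign_natCast_of_ne_zero n.succ_ne_zero, Int.cast_one, one_mul]
  have hsol := recurrenceSolution_spec f hf₀ hf₁
  refine ⟨a, ha_odd, fun i => ?_⟩
  rcases i with n | n
  · simpa [← ha_nat] using hsol n
  · have hi : Int.negSucc n = -((n + 1 : ℕ) : ℤ) := rfl
    have hi' : Int.negSucc n + 1 = -(n : ℤ) := by omega
    rw [hi', hi, ha_odd, ha_odd, ha_nat, ha_nat, show -((n + 1 : ℕ) : ℤ) = -1 - n by omega, hf,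
      ← hsol]
    push_cast
    ring

theorem eq_cubic_of_odd_of_recurrence (G : ℤ → K) (hodd : Function.Odd G)
    (hrec : ∀ i : ℤ, (1 - i : K) * G (i + 1) + (2 + i) * G i = 0) (i : ℤ) :
    G i = i * (i - 1) * (i + 1) / 6 * G 2 := by
  have hnat : ∀ n : ℕ, G n = n * (n - 1) * (n + 1) / 6 * G 2 := by
    intro n
    induction n with
    | zero => simp [hodd.map_zero]
    | succ n ih =>
      match n, ih with
      | 0, _ =>
        have h := hrec 1
        norm_num at h ⊢
        exact h
      | 1, _ => norm_num
      | n + 2, ih =>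
        have hne : (1 - ((n + 2 : ℕ) : K)) ≠ 0 := by
          push_cast
          intro h
          exact n.cast_add_one_ne_zero (by linear_combination -h)
        apply mul_left_cancel₀ hne
        have := hrec (n + 2)
        push_cast at this ih ⊢
        linear_combination this - (2 + ((n : K) + 2)) * ih
  obtain ⟨n, rfl | rfl⟩ := Int.eq_nat_or_neg i
  · exact_mod_cast hnat n
  · rw [hodd, hnat]; push_cast; ring

end Recurrence

namespace IsVirasoroAlgebra

variable {K V : Type*} [Field K] [LieRing V] [LieAlgebra K V] {E : ℤ → V} {t : V}

open AlternatingMap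

theorem lie_E_E (hV : IsVirasoroAlgebra K E t) (n m : ℤ) :
    ⁅E n, E m⁆ = ((m : K) - n) • E (n + m) +
      (if n + m = 0 then -(((n : K) ^ 3 - n) / 12) else 0) • t := by
  rw [hV.2.1, ← Int.cast_smul_eq_zsmul K, Int.cast_sub]

theorem exists_lie_E_E (hV : IsVirasoroAlgebra K E t) (n m : ℤ) :
    ∃ c : K, ⁅E n, E m⁆ = ((m : K) - n) • E (n + m) + c • t :=
  ⟨_, hV.lie_E_E n m⟩

theorem lie_E_one (hV : IsVirasoroAlgebra K E t) (n : ℤ) :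
    ⁅E n, E 1⁆ = ((1 : K) - n) • E (n + 1) := by
  rw [hV.lie_E_E, Int.cast_one]
  split_ifs with h
  · obtain rfl : n = -1 := by omega
    norm_num
  · rw [zero_smul, add_zero]

theorem lie_E_t (hV : IsVirasoroAlgebra K E t) (n : ℤ) : ⁅E n, t⁆ = 0 :=
  hV.2.2 n

theorem cocycle_recurrence (hV : IsVirasoroAlgebra K E t) {ψ : V [⋀^Fin 3]→ₗ[K] K}
    (hψ : IsLieCocycle3 K ψ) (i : ℤ) :
    (1 - i : K) * ψ ![E (i + 1), E (-(i + 1)), t] + (2 + i) * ψ ![E i, E (-i), t] =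
      (2 * i + 1) * ψ ![E 1, E (-1), t] := by
  have h := hψ (E i) (E 1) (E (-(i + 1))) t
  obtain ⟨c₁, hc₁⟩ := hV.exists_lie_E_E i (-(i + 1))
  obtain ⟨c₂, hc₂⟩ := hV.exists_lie_E_E 1 (-(i + 1))
  rw [hV.lie_E_one, hc₁, hc₂, hV.lie_E_t, hV.lie_E_t, hV.lie_E_t,
    show i + -(i + 1) = -1 by ring, show 1 + -(i + 1) = -i by ring] at h
  simp only [map_vecCons_add, map_vecCons_smul, map_vecCons_zero, map_fin_three_eq₀₂,
    smul_eq_mul] at h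
  rw [map_fin_three_swap₀₁ ψ (E 1), map_fin_three_swap₀₁ ψ (E i)] at h
  push_cast at h
  linear_combination h

theorem lieD2_E_E_t (hV : IsVirasoroAlgebra K E t) (φ : V [⋀^Fin 2]→ₗ[K] K) (i j : ℤ) :
    lieD2 K φ (E i) (E j) t = (j - i : K) * φ ![E (i + j), t] := by
  obtain ⟨c, hc⟩ := hV.exists_lie_E_E i j
  simp only [lieD2, hc, hV.lie_E_t, map_vecCons_add, map_vecCons_smul, map_vecCons_zero,
    map_fin_two_self, smul_eq_mul]
  ring

theorem lieD2_E_E_E_one (hV : IsVirasoroAlgebra K E t) {φ : V [⋀^Fin 2]→ₗ[K] K}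
    (hφ : φ ![E 1, t] = 0) (i j : ℤ) :
    lieD2 K φ (E i) (E j) (E 1) = (j - i : K) * φ ![E (i + j), E 1] -
      (1 - i : K) * φ ![E (i + 1), E j] + (1 - j : K) * φ ![E (j + 1), E i] := by
  obtain ⟨c, hc⟩ := hV.exists_lie_E_E i j
  simp only [lieD2, hc, hV.lie_E_one, map_vecCons_add, map_vecCons_smul,
    map_fin_two_swap φ (E 1) t, hφ, smul_eq_mul]
  ring

/-- Values on the basis `some m ↦ E m`, `none ↦ t` of the 2-cochain with `φ(E m, E (-m)) = a m`
and `φ(E 0, t) = b₀`. -/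
def degreeZeroCoeff (a : ℤ → K) (b₀ : K) : Option ℤ → Option ℤ → K
  | some m, some n => if m + n = 0 then a m else 0
  | some m, none => if m = 0 then b₀ else 0
  | none, some n => if n = 0 then -b₀ else 0
  | none, none => 0

theorem exists_degreeZero_cochain [NeZero (2 : K)] (hV : IsVirasoroAlgebra K E t) {a : ℤ → K}
    (ha : Function.Odd a) (b₀ : K) :
    ∃ φ : V [⋀^Fin 2]→ₗ[K] K, (∀ m n, φ ![E m, E n] = if m + n = 0 then a m else 0) ∧
      ∀ m, φ ![E m, t] = if m = 0 then b₀ else 0 := by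
  obtain ⟨b, hbt, hbE⟩ := hV.1
  obtain ⟨φ, hφ⟩ := b.exists_alternatingMap_fin_two_apply_basis (degreeZeroCoeff a b₀) <| by
    rintro (_ | m) (_ | n) <;> simp only [degreeZeroCoeff, neg_zero]
    · split_ifs <;> simp
    · split_ifs <;> simp
    · by_cases h : m + n = 0
      · obtain rfl : n = -m := by omega
        simp [ha m]
      · rw [if_neg h, if_neg (by omega), neg_zero]
  refine ⟨φ, fun m n => ?_, fun m => ?_⟩
  · rw [← hbE, ← hbE, hφ, degreeZeroCoeff]
  · rw [← hbE, ← hbt, hφ, degreeZeroCoeff]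

theorem sub_lieD2_E_E_E_one_eq_zero [CharZero K] (hV : IsVirasoroAlgebra K E t)
    {ψ : V [⋀^Fin 3]→ₗ[K] K} (hdeg : ∀ i j k : ℤ, i + j + k ≠ 0 → ψ ![E i, E j, E k] = 0)
    {φ : V [⋀^Fin 2]→ₗ[K] K} {a : ℤ → K} (ha_odd : Function.Odd a)
    (ha : ∀ i : ℤ, ((i : K) - 1) * a (i + 1) - (i + 2) * a i = ψ ![E i, E (-1 - i), E 1])
    (hφE : ∀ m n, φ ![E m, E n] = if m + n = 0 then a m else 0) (hφt : φ ![E 1, t] = 0)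
    (i j : ℤ) : ψ ![E i, E j, E 1] - lieD2 K φ (E i) (E j) (E 1) = 0 := by
  rw [hV.lieD2_E_E_E_one hφt, hφE, hφE, hφE]
  by_cases hij : i + j + 1 = 0
  · obtain rfl : j = -1 - i := by omega
    have ha₁ : a 1 = 0 := by
      have h := ha 1
      norm_num [map_fin_three_eq₀₂] at h
      exact h
    rw [if_pos (by omega), if_pos (by omega), if_pos (by omega), show i + (-1 - i) = -1 by ring,
      show -1 - i + 1 = -i by ring, ha_odd, ha_odd, ha₁, ← ha]
    push_cast
    ring
  · rw [hdeg i j 1 (by omega), if_neg (by omega), if_neg (by omega), if_neg (by omega)]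
    ring

theorem sub_lieD2_E_E_t_eq [CharZero K] (hV : IsVirasoroAlgebra K E t)
    {ψ : V [⋀^Fin 3]→ₗ[K] K} (hψ : IsLieCocycle3 K ψ)
    (hdegt : ∀ i j : ℤ, i + j ≠ 0 → ψ ![E i, E j, t] = 0) {φ : V [⋀^Fin 2]→ₗ[K] K}
    (hφt : ∀ m, φ ![E m, t] = if m = 0 then -ψ ![E 1, E (-1), t] / 2 else 0) (i j : ℤ) :
    ψ ![E i, E j, t] - lieD2 K φ (E i) (E j) t =
      (if i = -j then ((i : K) * ((i : K) - 1) * ((i : K) + 1)) / 6 else 0) *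
        (ψ ![E 2, E (-2), t] - lieD2 K φ (E 2) (E (-2)) t) := by
  set G : ℤ → K := fun i => ψ ![E i, E (-i), t] - lieD2 K φ (E i) (E (-i)) t
  have hG (i : ℤ) : G i = ψ ![E i, E (-i), t] - i * ψ ![E 1, E (-1), t] := by
    simp only [G, hV.lieD2_E_E_t, add_neg_cancel, hφt, if_pos]
    push_cast
    ring
  have hG_odd : Function.Odd G := fun i => by
    rw [hG, hG, neg_neg, map_fin_three_swap₀₁ ψ (E i)]
    push_cast
    ring
  have hG_rec (i : ℤ) : (1 - i : K) * G (i + 1) + (2 + i) * G i = 0 := by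
    rw [hG, hG]
    push_cast
    linear_combination hV.cocycle_recurrence hψ i
  by_cases hij : i = -j
  · obtain rfl : j = -i := by omega
    rw [if_pos (neg_neg i).symm]
    exact eq_cubic_of_odd_of_recurrence G hG_odd hG_rec i
  · rw [hV.lieD2_E_E_t, hφt, if_neg (by omega), hdegt i j (by omega), if_neg hij]
    ring

end IsVirasoroAlgebra

/-- if `ψ'` is a degree-zero 3-cocycle of the Virasoro algebra with values
in the trivial module `K` and `ψ'(ê₁, ê₋₁, ê₀) = 0`, then there is a 2-cochain `φ` such
that the cohomologous cocycle `ψ = ψ' - δ₂ φ` satisfies `ψ(ê i, ê j, ê 1) = 0` and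
`ψ(ê i, ê j, t) = δ_{i,-j} (1/6) i (i-1)(i+1) ψ(ê 2, ê₋₂, t)` for all `i, j`. -/
theorem virasoro_cocycle_normalize_level_one
    {K V : Type*} [Field K] [CharZero K] [LieRing V] [LieAlgebra K V]
    (E : ℤ → V) (t : V) (hV : IsVirasoroAlgebra K E t)
    (ψ' : AlternatingMap K V K (Fin 3)) (hcoc : IsLieCocycle3 K ψ')
    (hdeg : ∀ i j k : ℤ, i + j + k ≠ 0 → ψ' ![E i, E j, E k] = 0)
    (hdegt : ∀ i j : ℤ, i + j ≠ 0 → ψ' ![E i, E j, t] = 0)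
    (h0 : ψ' ![E 1, E (-1), E 0] = 0) :
    ∃ φ : AlternatingMap K V K (Fin 2),
      (∀ i j : ℤ, ψ' ![E i, E j, E 1] - lieD2 K φ (E i) (E j) (E 1) = 0) ∧
      (∀ i j : ℤ, ψ' ![E i, E j, t] - lieD2 K φ (E i) (E j) t =
        (if i = -j then ((i : K) * ((i : K) - 1) * ((i : K) + 1)) / 6 else 0) *
          (ψ' ![E 2, E (-2), t] - lieD2 K φ (E 2) (E (-2)) t)) := by
  obtain ⟨a, ha_odd, ha⟩ := exists_odd_solution_recurrence (fun i => ψ' ![E i, E (-1 - i), E 1])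
    (fun i => by rw [show -1 - (-1 - i) = i by ring, AlternatingMap.map_fin_three_swap₀₁])
    (by rw [sub_zero, ← neg_eq_zero, ← AlternatingMap.map_fin_three_swap₀₂, h0])
    (AlternatingMap.map_fin_three_eq₀₂ ψ' (E 1) (E (-1 - 1)))
  obtain ⟨φ, hφE, hφt⟩ := hV.exists_degreeZero_cochain ha_odd (-ψ' ![E 1, E (-1), t] / 2)
  exact ⟨φ, hV.sub_lieD2_E_E_E_one_eq_zero hdeg ha_odd ha hφE (by rw [hφt, if_neg one_ne_zero]),
    hV.sub_lieD2_E_E_t_eq hcoc hdegt hφt⟩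
end

section
/- Let ψ be a 3-cocycle of the Witt algebra W with values in the trivial module K that is homogeneous of degree zero and satisfies ψ(e_i, e_j, e_1) = 0 for all i, j ∈ ℤ. Then ψ = 0, i.e. ψ(e_i, e_j, e_k) = 0 for all i, j, k ∈ ℤ. -/
/-!
Because `ψ(·, ·, e 1) = 0`, the cocycle identity with `e 1` as one argument says that `ψ` is
invariant under `ad (e 1)`:
`(a - 1) ψ(e (a+1), e b, e c) + (b - 1) ψ(e a, e (b+1), e c) + (c - 1) ψ(e a, e b, e (c+1)) = 0`.
For a degree-zero triple `a > b > c` with `b ≤ a - 2`, this expresses `(a - 2) ψ(e a, e b, e c)`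
through triples of smaller spread `a - c`. Induction on the spread then leaves two families:
the triple `(2, 0, -2)`, killed by a combination of eight instances of the cocycle identity, and
the triples `(a, a - 1, 1 - 2a)`, which the single instance `(-a, 1 - a, a - 1, a)` of the
cocycle identity expresses through triples of smaller spread and the triple
`(2a - 1, 1 - a, -a)` of the same spread but of the first kind.
-/

namespace AlternatingMap

variable {R M N ι : Type*} [CommSemiring R] [AddCommMonoid M] [Module R M] [AddCommGroup N]
  [Module R N] (ψ : M [⋀^Fin 3]→ₗ[R] N)

theorem map_fin_three_swap_zero_one (x y z : M) : ψ ![x, y, z] = -ψ ![y, x, z] := by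
  rw [← ψ.map_swap ![y, x, z] (i := 0) (j := 1) (by decide)]
  congr 1; ext i; fin_cases i <;> rfl

theorem map_fin_three_swap_one_two (x y z : M) : ψ ![x, y, z] = -ψ ![x, z, y] := by
  rw [← ψ.map_swap ![x, z, y] (i := 1) (j := 2) (by decide)]
  congr 1; ext i; fin_cases i <;> rfl

theorem map_fin_three_rotate (x y z : M) : ψ ![x, y, z] = ψ ![z, x, y] := by
  rw [map_fin_three_swap_one_two, map_fin_three_swap_zero_one, neg_neg]

theorem map_fin_three_swap_zero_two (x y z : M) : ψ ![x, y, z] = -ψ ![z, y, x] := by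
  rw [map_fin_three_swap_zero_one, map_fin_three_rotate, map_fin_three_swap_one_two]

theorem map_fin_three_smul_zero (r : R) (x y z : M) : ψ ![r • x, y, z] = r • ψ ![x, y, z] := by
  have hupd : ∀ w : M, Function.update ![x, y, z] 0 w = ![w, y, z] := fun w => by
    ext i; fin_cases i <;> rfl
  rw [← hupd, ψ.map_update_smul, hupd]

theorem map_fin_three_mid_eq_zero (v : ι → M) {k : ι} (h : ∀ i j, ψ ![v i, v j, v k] = 0)
    (i j : ι) : ψ ![v i, v k, v j] = 0 := by
  rw [map_fin_three_swap_one_two, h, neg_zero]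

theorem map_fin_three_head_eq_zero (v : ι → M) {k : ι} (h : ∀ i j, ψ ![v i, v j, v k] = 0)
    (i j : ι) : ψ ![v k, v i, v j] = 0 := by
  rw [← map_fin_three_rotate, h]

theorem map_fin_three_eq_zero_of_sorted [LinearOrder ι] (v : ι → M) {P : ι → ι → ι → Prop}
    (hP₀₁ : ∀ a b c, P a b c → P b a c) (hP₁₂ : ∀ a b c, P a b c → P a c b)
    (h : ∀ a b c, c ≤ b → b ≤ a → P a b c → ψ ![v a, v b, v c] = 0) {a b c : ι}
    (habc : P a b c) : ψ ![v a, v b, v c] = 0 := by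
  have h' : ∀ a b c, b ≤ a → P a b c → ψ ![v a, v b, v c] = 0 := by
    intro a b c hba habc
    rcases le_total c b with hcb | hbc
    · exact h a b c hcb hba habc
    rcases le_total c a with hca | hac
    · rw [map_fin_three_swap_one_two, h a c b hbc hca (hP₁₂ _ _ _ habc), neg_zero]
    · rw [map_fin_three_rotate, h c a b hba hac (hP₀₁ _ _ _ (hP₁₂ _ _ _ habc))]
  rcases le_total b a with hba | hab
  · exact h' a b c hba habc
  · rw [map_fin_three_swap_zero_one, h' b a c hab (hP₀₁ _ _ _ habc), neg_zero]

end AlternatingMap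

def tripleSpread (a b c : ℤ) : ℤ := max a (max b c) - min a (min b c)

section WittCocycle

variable {K W : Type*} [Field K] [LieRing W] [LieAlgebra K W] {e : ℤ → W}
  {ψ : W [⋀^Fin 3]→ₗ[K] K}

theorem IsLieCocycle3.witt_basis_identity (he : ∀ n m : ℤ, ⁅e n, e m⁆ = (m - n) • e (n + m))
    (hψ : IsLieCocycle3 K ψ) (a b c d : ℤ) :
    ((b : K) - a) * ψ ![e (a + b), e c, e d] - ((c : K) - a) * ψ ![e (a + c), e b, e d]
      + ((d : K) - a) * ψ ![e (a + d), e b, e c] + ((c : K) - b) * ψ ![e (b + c), e a, e d]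
      - ((d : K) - b) * ψ ![e (b + d), e a, e c] + ((d : K) - c) * ψ ![e (c + d), e a, e b]
      = 0 := by
  simpa only [he, ← Int.cast_smul_eq_zsmul K, ψ.map_fin_three_smul_zero, smul_eq_mul,
    Int.cast_sub] using hψ (e a) (e b) (e c) (e d)

theorem IsLieCocycle3.witt_ad_e_one_invariant
    (he : ∀ n m : ℤ, ⁅e n, e m⁆ = (m - n) • e (n + m)) (hψ : IsLieCocycle3 K ψ)
    (h1 : ∀ i j : ℤ, ψ ![e i, e j, e 1] = 0) (a b c : ℤ) :
    ((a : K) - 1) * ψ ![e (a + 1), e b, e c] + ((b : K) - 1) * ψ ![e a, e (b + 1), e c]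
      + ((c : K) - 1) * ψ ![e a, e b, e (c + 1)] = 0 := by
  have h := hψ.witt_basis_identity he 1 a b c
  rw [ψ.map_fin_three_mid_eq_zero e h1, ψ.map_fin_three_mid_eq_zero e h1,
    ψ.map_fin_three_mid_eq_zero e h1, ψ.map_fin_three_swap_zero_one (e (1 + b)),
    ← ψ.map_fin_three_rotate (e a), add_comm 1 a, add_comm 1 b, add_comm 1 c] at h
  linear_combination h

theorem IsLieCocycle3.witt_apply_two_zero_neg_two [CharZero K]
    (he : ∀ n m : ℤ, ⁅e n, e m⁆ = (m - n) • e (n + m)) (hψ : IsLieCocycle3 K ψ)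
    (h1 : ∀ i j : ℤ, ψ ![e i, e j, e 1] = 0) : ψ ![e 2, e 0, e (-2)] = 0 := by
  have swap₀₁ (a b c : ℤ) (_ : a < b) : ψ ![e a, e b, e c] = -ψ ![e b, e a, e c] :=
    ψ.map_fin_three_swap_zero_one _ _ _
  have swap₁₂ (a b c : ℤ) (_ : b < c) : ψ ![e a, e b, e c] = -ψ ![e a, e c, e b] :=
    ψ.map_fin_three_swap_one_two _ _ _
  have diag₀₁ (a b : ℤ) : ψ ![e a, e a, e b] = 0 :=
    ψ.map_eq_zero_of_eq _ (i := 0) (j := 1) rfl (by decide)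
  have diag₁₂ (a b : ℤ) : ψ ![e a, e b, e b] = 0 :=
    ψ.map_eq_zero_of_eq _ (i := 1) (j := 2) rfl (by decide)
  have r := hψ.witt_basis_identity he
  have r₁ := r (-2) (-1) 1 2
  have r₂ := r (-3) 0 1 2
  have r₃ := r (-3) (-1) 1 3
  have r₄ := r (-3) (-2) 2 3
  have r₅ := r (-4) (-1) 2 3
  have r₆ := r (-4) (-1) 1 4
  have r₇ := r (-4) 0 1 3
  have r₈ := r (-3) (-2) 1 4
  simp only [Int.reduceAdd, Int.reduceLT, swap₀₁, swap₁₂, diag₀₁, diag₁₂,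
    ψ.map_fin_three_mid_eq_zero e h1, ψ.map_fin_three_head_eq_zero e h1] at r₁ r₂ r₃ r₄ r₅ r₆ r₇ r₈
  -- with all arguments sorted, these coefficients (found by Gaussian elimination) cancel every
  -- value except `ψ ![e 2, e 0, e (-2)]`
  have h60 : (60 : K) * ψ ![e 2, e 0, e (-2)] = 0 := by
    linear_combination -71 * r₁ + 37 * r₂ - 2 * r₃ + 9 * r₄ - 3 * r₅ + r₆ + r₇ - 3 * r₈
  simpa using h60

theorem IsLieCocycle3.witt_eq_zero_of_lower [CharZero K]
    (he : ∀ n m : ℤ, ⁅e n, e m⁆ = (m - n) • e (n + m)) (hψ : IsLieCocycle3 K ψ)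
    (h1 : ∀ i j : ℤ, ψ ![e i, e j, e 1] = 0) {a b c : ℤ} (ha : a ≠ 2)
    (hb : ψ ![e (a - 1), e (b + 1), e c] = 0) (hc : ψ ![e (a - 1), e b, e (c + 1)] = 0) :
    ψ ![e a, e b, e c] = 0 := by
  have h := hψ.witt_ad_e_one_invariant he h1 (a - 1) b c
  rw [sub_add_cancel, hb, hc] at h
  have ha' : ((a - 1 : ℤ) : K) - 1 ≠ 0 := by
    rw [sub_ne_zero]; exact_mod_cast (by omega : a - 1 ≠ 1)
  have h' : (((a - 1 : ℤ) : K) - 1) * ψ ![e a, e b, e c] = 0 := by linear_combination h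
  exact (mul_eq_zero.mp h').resolve_left ha'

theorem IsLieCocycle3.witt_apply_self_sub_one_eq_zero
    (he : ∀ n m : ℤ, ⁅e n, e m⁆ = (m - n) • e (n + m)) (hψ : IsLieCocycle3 K ψ)
    (h1 : ∀ i j : ℤ, ψ ![e i, e j, e 1] = 0) {a : ℤ}
    (h₁ : ψ ![e (-1), e (1 - a), e a] = 0) (h₂ : ψ ![e 0, e (1 - a), e (a - 1)] = 0)
    (h₃ : ψ ![e 0, e (-a), e a] = 0) (h₄ : ψ ![e (2 * a - 1), e (1 - a), e (-a)] = 0) :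
    ψ ![e a, e (a - 1), e (1 - 2 * a)] = 0 := by
  have h := hψ.witt_basis_identity he (-a) (1 - a) (a - 1) a
  rw [show -a + (1 - a) = 1 - 2 * a by ring, show -a + (a - 1) = -1 by ring, neg_add_cancel,
    show 1 - a + (a - 1) = 0 by ring, show 1 - a + a = 1 by ring,
    show a - 1 + a = 2 * a - 1 by ring, h₁, h₂, ψ.map_fin_three_head_eq_zero e h1,
    ψ.map_fin_three_swap_one_two (e (2 * a - 1)), h₄] at h
  rw [ψ.map_fin_three_swap_zero_two]
  push_cast at h
  linear_combination -h + (2 * (a : K) - 2) * h₃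

theorem IsLieCocycle3.witt_eq_zero_of_sorted_of_spread_lt [CharZero K]
    (he : ∀ n m : ℤ, ⁅e n, e m⁆ = (m - n) • e (n + m)) (hψ : IsLieCocycle3 K ψ)
    (h1 : ∀ i j : ℤ, ψ ![e i, e j, e 1] = 0) {a b c : ℤ} (hcb : c ≤ b) (hba : b ≤ a)
    (hsum : a + b + c = 0)
    (ih : ∀ x y z, x + y + z = 0 → tripleSpread x y z < a - c → ψ ![e x, e y, e z] = 0) :
    ψ ![e a, e b, e c] = 0 := by
  rcases hba.eq_or_lt with rfl | hba
  · exact ψ.map_eq_zero_of_eq _ (i := 0) (j := 1) rfl (by decide)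
  rcases hcb.eq_or_lt with rfl | hcb
  · exact ψ.map_eq_zero_of_eq _ (i := 1) (j := 2) rfl (by decide)
  by_cases ha1 : a = 1
  · rw [ha1]; exact ψ.map_fin_three_head_eq_zero e h1 b c
  by_cases hb1 : b = 1
  · rw [hb1]; exact ψ.map_fin_three_mid_eq_zero e h1 a c
  by_cases ha2 : a = 2
  · obtain ⟨rfl, rfl, rfl⟩ : a = 2 ∧ b = 0 ∧ c = -2 := by omega
    exact hψ.witt_apply_two_zero_neg_two he h1
  have lower {x y z : ℤ} (hx : x ≠ 2) (hy : x + y + z = 0)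
      (hsmall : tripleSpread (x - 1) (y + 1) z < a - c ∧
        tripleSpread (x - 1) y (z + 1) < a - c) : ψ ![e x, e y, e z] = 0 :=
    hψ.witt_eq_zero_of_lower he h1 hx (ih _ _ _ (by omega) hsmall.1)
      (ih _ _ _ (by omega) hsmall.2)
  by_cases hb : b = a - 1
  · obtain ⟨rfl, rfl⟩ : b = a - 1 ∧ c = 1 - 2 * a := by omega
    refine hψ.witt_apply_self_sub_one_eq_zero he h1 (ih _ _ _ (by ring) ?_)
      (ih _ _ _ (by ring) ?_) (ih _ _ _ (by ring) ?_) (lower (by omega) (by ring) ?_) <;>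
    · unfold tripleSpread; omega
  · exact lower ha2 hsum (by unfold tripleSpread; omega)

theorem IsLieCocycle3.witt_eq_zero_of_sum_eq_zero [CharZero K]
    (he : ∀ n m : ℤ, ⁅e n, e m⁆ = (m - n) • e (n + m)) (hψ : IsLieCocycle3 K ψ)
    (h1 : ∀ i j : ℤ, ψ ![e i, e j, e 1] = 0) {a b c : ℤ} (hsum : a + b + c = 0) :
    ψ ![e a, e b, e c] = 0 := by
  suffices h : ∀ n : ℕ, ∀ a b c, a + b + c = 0 → tripleSpread a b c ≤ n →
      ψ ![e a, e b, e c] = 0 from h _ a b c hsum (Int.self_le_toNat _)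
  intro n
  induction n using Nat.strong_induction_on with
  | _ n ih =>
    intro a b c hsum hn
    refine ψ.map_fin_three_eq_zero_of_sorted e
      (P := fun a b c => a + b + c = 0 ∧ tripleSpread a b c ≤ n) ?_ ?_ ?_ ⟨hsum, hn⟩
    · unfold tripleSpread; omega
    · unfold tripleSpread; omega
    rintro a b c hcb hba ⟨hsum, hn⟩
    refine hψ.witt_eq_zero_of_sorted_of_spread_lt he h1 hcb hba hsum fun x y z hxyz hlt => ?_
    refine ih (tripleSpread x y z).toNat ?_ x y z hxyz (Int.self_le_toNat _)
    unfold tripleSpread at *; omega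

end WittCocycle

/-- a degree-zero 3-cocycle `ψ` of the Witt algebra with values in the
trivial module `K` with `ψ(e i, e j, e 1) = 0` for all `i, j` vanishes identically. -/
theorem witt_cocycle_level_one_zero_is_zero
    {K W : Type*} [Field K] [CharZero K] [LieRing W] [LieAlgebra K W]
    (e : ℤ → W) (hW : IsWittAlgebra K e)
    (ψ : AlternatingMap K W K (Fin 3)) (hcoc : IsLieCocycle3 K ψ)
    (hdeg : ∀ i j k : ℤ, i + j + k ≠ 0 → ψ ![e i, e j, e k] = 0)
    (h1 : ∀ i j : ℤ, ψ ![e i, e j, e 1] = 0) :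
    ∀ i j k : ℤ, ψ ![e i, e j, e k] = 0 := by
  intro i j k
  by_cases hsum : i + j + k = 0
  · exact hcoc.witt_eq_zero_of_sum_eq_zero hW.2 h1 hsum
  · exact hdeg i j k hsum
end

section
/- Let ψ be a 3-cocycle of the Virasoro algebra V with values in the trivial module K that is homogeneous of degree zero, satisfies ψ(ê_i, ê_j, ê_1) = 0 for all i, j ∈ ℤ, and satisfies ψ(ê_i, ê_j, t) = δ_{i,−j} · (1/6)(i − 1) i (i + 1) · ψ(ê_2, ê_{−2}, t) for all i, j ∈ ℤ. Then ψ = 0: ψ(ê_i, ê_j, ê_k) = 0 and ψ(ê_i, ê_j, t) = 0 for all i, j, k ∈ ℤ. -/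
/-!
Write `f(i, j, k) = ψ(ê_i, ê_j, ê_k)`, `c = ψ(ê_2, ê_{-2}, t)` and `g = f(-2, 0, 2)`. The cocycle
identity on `(ê_i, ê_j, ê_k, ê_l)` is a linear relation between values of `f`, plus central terms
that only occur when `{i, j, k, l} = {a, -a, b, -b}` with `|a|, |b| ≥ 2`. For `l = 1` it gives
recursions showing that `f(-n, 0, n)` and `f(1 - n, -1, n)` are fixed multiples of `g`; seven
further instances, with indices of absolute value at most 5, then express `c` as two different
multiples of `g`, so `c = g = 0`. Hence `f` vanishes as soon as an index lies in `{-1, 0, 1}`,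
and the identities with `l = ±1` express `f` at a triple with smallest index `m ≤ -3` through
values at triples with larger smallest index, so `f = 0` by induction.
-/

namespace AlternatingMap

variable {R M N : Type*} [CommRing R] [AddCommGroup M] [Module R M] [AddCommGroup N] [Module R N]
  (f : M [⋀^Fin 3]→ₗ[R] N) (x y z : M)

theorem map_three_swap_left : f ![y, x, z] = -f ![x, y, z] := by
  rw [← f.map_swap ![x, y, z] (i := 0) (j := 1) (by decide)]
  congr 1; ext i; fin_cases i <;> rfl

theorem map_three_swap_right : f ![x, z, y] = -f ![x, y, z] := by
  rw [← f.map_swap ![x, y, z] (i := 1) (j := 2) (by decide)]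
  congr 1; ext i; fin_cases i <;> rfl

theorem map_three_rotate : f ![y, z, x] = f ![x, y, z] := by
  rw [map_three_swap_right f y x z, map_three_swap_left, neg_neg]

theorem map_three_swap_outer : f ![z, y, x] = -f ![x, y, z] := by
  rw [← f.map_swap ![x, y, z] (i := 0) (j := 2) (by decide)]
  congr 1; ext i; fin_cases i <;> rfl

theorem map_three_self_left : f ![x, x, y] = 0 :=
  f.map_eq_zero_of_eq _ (i := 0) (j := 1) rfl (by decide)

theorem map_three_self_outer : f ![x, y, x] = 0 :=
  f.map_eq_zero_of_eq _ (i := 0) (j := 2) rfl (by decide)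

theorem map_three_self_right : f ![x, y, y] = 0 :=
  f.map_eq_zero_of_eq _ (i := 1) (j := 2) rfl (by decide)

theorem map_three_add_smul_left (a b : R) (u v : M) :
    f ![a • u + b • v, y, z] = a • f ![u, y, z] + b • f ![v, y, z] := by
  simp only [← curryLeft_apply_apply, map_add, map_smul]
  rfl

end AlternatingMap

section Virasoro

variable {K V : Type*} [Field K] [LieRing V] [LieAlgebra K V] {E : ℤ → V} {t : V}

open AlternatingMap

theorem IsVirasoroAlgebra.apply_lie (hV : IsVirasoroAlgebra K E t)
    (ψ : AlternatingMap K V K (Fin 3)) (n m : ℤ) (y z : V) :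
    ψ ![⁅E n, E m⁆, y, z] = (m - n) * ψ ![E (n + m), y, z]
      + (if n + m = 0 then -(((n : K) ^ 3 - n) / 12) else 0) * ψ ![t, y, z] := by
  rw [hV.2.1, ← Int.cast_smul_eq_zsmul K, map_three_add_smul_left, smul_eq_mul, smul_eq_mul]
  push_cast
  rfl

structure IsNormalizedVirasoroCocycle (K : Type*) {V : Type*} [Field K] [LieRing V]
    [LieAlgebra K V] (E : ℤ → V) (t : V) (ψ : AlternatingMap K V K (Fin 3)) : Prop where
  isLieCocycle3 : IsLieCocycle3 K ψ
  apply_E_of_add_ne_zero : ∀ i j k : ℤ, i + j + k ≠ 0 → ψ ![E i, E j, E k] = 0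
  apply_E_E_E_one : ∀ i j : ℤ, ψ ![E i, E j, E 1] = 0
  apply_E_E_t : ∀ i j : ℤ, ψ ![E i, E j, t] =
    (if i = -j then (((i : K) - 1) * (i : K) * ((i : K) + 1)) / 6 else 0) * ψ ![E 2, E (-2), t]

/-- The cocycle condition at `(E i, E j, E k, E l)` with the central terms dropped. -/
def wittSum (ψ : AlternatingMap K V K (Fin 3)) (E : ℤ → V) (i j k l : ℤ) : K :=
  (j - i) * ψ ![E (i + j), E k, E l] - (k - i) * ψ ![E (i + k), E j, E l]
    + (l - i) * ψ ![E (i + l), E j, E k] + (k - j) * ψ ![E (j + k), E i, E l]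
    - (l - j) * ψ ![E (j + l), E i, E k] + (l - k) * ψ ![E (k + l), E i, E j]

namespace IsNormalizedVirasoroCocycle

variable {ψ : AlternatingMap K V K (Fin 3)}

theorem apply_t_E_E (hψ : IsNormalizedVirasoroCocycle K E t ψ) (k l : ℤ) :
    ψ ![t, E k, E l] =
      (if k = -l then (((k : K) - 1) * k * (k + 1)) / 6 else 0) * ψ ![E 2, E (-2), t] := by
  rw [← map_three_rotate, hψ.apply_E_E_t]

theorem apply_lie_of_natAbs_le_one (hV : IsVirasoroAlgebra K E t)
    (hψ : IsNormalizedVirasoroCocycle K E t ψ) {n m : ℤ} (k : ℤ) {l : ℤ}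
    (h : m.natAbs ≤ 1 ∨ l.natAbs ≤ 1) :
    ψ ![⁅E n, E m⁆, E k, E l] = (m - n) * ψ ![E (n + m), E k, E l] := by
  rw [hV.apply_lie, hψ.apply_t_E_E, add_eq_left]
  split_ifs <;> try simp only [zero_mul, mul_zero]
  rcases h with h | h
  · obtain rfl | rfl | rfl : n = -1 ∨ n = 0 ∨ n = 1 := by omega
    all_goals norm_num
  · obtain rfl | rfl | rfl : k = -1 ∨ k = 0 ∨ k = 1 := by omega
    all_goals norm_num

theorem wittSum_eq_zero (hV : IsVirasoroAlgebra K E t)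
    (hψ : IsNormalizedVirasoroCocycle K E t ψ) (i j k : ℤ) {l : ℤ} (hl : l.natAbs ≤ 1) :
    wittSum ψ E i j k l = 0 := by
  have h := hψ.isLieCocycle3 (E i) (E j) (E k) (E l)
  simp only [hψ.apply_lie_of_natAbs_le_one hV _ (Or.inr hl),
    hψ.apply_lie_of_natAbs_le_one hV _ (Or.inl hl)] at h
  rw [← h, wittSum]

theorem apply_E_neg_E_zero_E_recursion (hV : IsVirasoroAlgebra K E t)
    (hψ : IsNormalizedVirasoroCocycle K E t ψ) (n : ℤ) :
    (1 - n) * ψ ![E (-(n + 1)), E 0, E (n + 1)] + (n + 2) * ψ ![E (-n), E 0, E n] = 0 := by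
  have h := hψ.wittSum_eq_zero hV n (-(n + 1)) 0 (l := 1) (by decide)
  simp only [wittSum] at h
  push_cast at h
  grind [map_three_swap_left, map_three_swap_right, map_three_rotate, hψ.apply_E_E_E_one]

theorem apply_E_one_sub_E_neg_one_E_recursion (hV : IsVirasoroAlgebra K E t)
    (hψ : IsNormalizedVirasoroCocycle K E t ψ) (n : ℤ) :
    (1 - n) * ψ ![E (-n), E (-1), E (n + 1)] + (n + 1) * ψ ![E (1 - n), E (-1), E n]
      + 2 * ψ ![E (-n), E 0, E n] = 0 := by
  have h := hψ.wittSum_eq_zero hV (-n) (-1) n (l := 1) (by decide)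
  simp only [wittSum] at h
  push_cast at h
  grind [map_three_swap_left, map_three_swap_right, map_three_rotate, hψ.apply_E_E_E_one]

theorem apply_E_neg_E_zero_E (hV : IsVirasoroAlgebra K E t)
    (hψ : IsNormalizedVirasoroCocycle K E t ψ) [CharZero K] {n : ℤ} (hn : 2 ≤ n) :
    ψ ![E (-n), E 0, E n] = (n + 1) * n * (n - 1) / 6 * ψ ![E (-2), E 0, E 2] := by
  induction n, hn using Int.leInduction with
  | base => norm_num
  | succ n hn ih =>
    have h := hψ.apply_E_neg_E_zero_E_recursion hV n
    have hn₁ : (1 - n : K) ≠ 0 := by exact_mod_cast (by omega : 1 - n ≠ 0)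
    apply mul_left_cancel₀ hn₁
    push_cast
    linear_combination h - (n + 2) * ih

theorem apply_E_one_sub_E_neg_one_E (hV : IsVirasoroAlgebra K E t)
    (hψ : IsNormalizedVirasoroCocycle K E t ψ) [CharZero K] {n : ℤ} (hn : 2 ≤ n) :
    ψ ![E (1 - n), E (-1), E n] = n * (n - 1) * (n - 2) / 3 * ψ ![E (-2), E 0, E 2] := by
  induction n, hn using Int.leInduction with
  | base => norm_num [map_three_self_left]
  | succ n hn ih =>
    have h := hψ.apply_E_one_sub_E_neg_one_E_recursion hV n
    have hn₁ : (1 - n : K) ≠ 0 := by exact_mod_cast (by omega : 1 - n ≠ 0)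
    apply mul_left_cancel₀ hn₁
    rw [show 1 - (n + 1) = -n by ring]
    push_cast
    linear_combination h - (n + 1) * ih - 2 * hψ.apply_E_neg_E_zero_E hV hn

theorem apply_level_two_eq_zero (hV : IsVirasoroAlgebra K E t)
    (hψ : IsNormalizedVirasoroCocycle K E t ψ) [CharZero K] :
    ψ ![E 2, E (-2), t] = 0 ∧ ψ ![E (-2), E 0, E 2] = 0 := by
  have zero₃ := hψ.apply_E_neg_E_zero_E hV (n := 3) (by norm_num)
  have zero₄ := hψ.apply_E_neg_E_zero_E hV (n := 4) (by norm_num)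
  have zero₅ := hψ.apply_E_neg_E_zero_E hV (n := 5) (by norm_num)
  have negOne₃ := hψ.apply_E_one_sub_E_neg_one_E hV (n := 3) (by norm_num)
  have negOne₄ := hψ.apply_E_one_sub_E_neg_one_E hV (n := 4) (by norm_num)
  have negOne₅ := hψ.apply_E_one_sub_E_neg_one_E hV (n := 5) (by norm_num)
  norm_num at zero₃ zero₄ zero₅ negOne₃ negOne₄ negOne₅
  have cocycle (i j k l : ℤ) := hψ.isLieCocycle3 (E i) (E j) (E k) (E l)
  simp only [hV.apply_lie, hψ.apply_t_E_E] at cocycle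
  have h523 : ψ ![E (-5), E 2, E 3] = -8 / 3 * ψ ![E (-2), E 0, E 2] := by
    have := cocycle (-4) (-1) 2 3
    norm_num at this
    grind [map_three_swap_left, map_three_swap_right, map_three_rotate, hψ.apply_E_E_E_one]
  have h325 : ψ ![E (-3), E (-2), E 5] = 8 * ψ ![E (-2), E 0, E 2] := by
    have := cocycle (-3) (-2) 1 4
    norm_num at this
    grind [map_three_swap_left, map_three_swap_right, map_three_rotate, hψ.apply_E_E_E_one]
  have c₁ : ψ ![E 2, E (-2), t] = -5 / 3 * ψ ![E (-2), E 0, E 2] := by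
    have := cocycle (-3) (-2) 2 3
    norm_num at this
    grind [map_three_swap_left, map_three_swap_right, map_three_rotate, hψ.apply_E_E_E_one]
  have c₂ : ψ ![E 2, E (-2), t] = -29 / 57 * ψ ![E (-2), E 0, E 2] := by
    have e₁ := cocycle (-5) (-2) 3 4
    have e₂ := cocycle (-4) (-3) 2 5
    have e₃ := cocycle (-5) (-2) 2 5
    have e₄ := cocycle (-4) (-3) 3 4
    norm_num at e₁ e₂ e₃ e₄
    grind [map_three_swap_left, map_three_swap_right, map_three_rotate, hψ.apply_E_E_E_one]
  constructor <;> grind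

theorem apply_E_E_t_eq_zero (hV : IsVirasoroAlgebra K E t)
    (hψ : IsNormalizedVirasoroCocycle K E t ψ) [CharZero K] (i j : ℤ) :
    ψ ![E i, E j, t] = 0 := by
  rw [hψ.apply_E_E_t, (hψ.apply_level_two_eq_zero hV).1, mul_zero]

theorem apply_E_zero_E_eq_zero (hV : IsVirasoroAlgebra K E t)
    (hψ : IsNormalizedVirasoroCocycle K E t ψ) [CharZero K] (p q : ℤ) :
    ψ ![E p, E 0, E q] = 0 := by
  have hg := (hψ.apply_level_two_eq_zero hV).2
  by_cases hpq : p + 0 + q = 0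
  swap
  · exact hψ.apply_E_of_add_ne_zero p 0 q hpq
  obtain rfl : p = -q := by omega
  rcases le_or_gt 2 q with hq | hq
  · rw [hψ.apply_E_neg_E_zero_E hV hq, hg, mul_zero]
  rcases le_or_gt q (-2) with hq' | hq'
  · have h := hψ.apply_E_neg_E_zero_E hV (n := -q) (by omega)
    rw [neg_neg] at h
    rw [map_three_swap_outer, h, hg, mul_zero, neg_zero]
  obtain rfl | rfl | rfl : q = -1 ∨ q = 0 ∨ q = 1 := by omega
  · rw [map_three_swap_outer, neg_neg, hψ.apply_E_E_E_one, neg_zero]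
  · exact map_three_self_left _ _ _
  · exact hψ.apply_E_E_E_one _ _

theorem apply_E_neg_one_E_eq_zero (hV : IsVirasoroAlgebra K E t)
    (hψ : IsNormalizedVirasoroCocycle K E t ψ) [CharZero K] (p q : ℤ) :
    ψ ![E p, E (-1), E q] = 0 := by
  have hg := (hψ.apply_level_two_eq_zero hV).2
  by_cases hpq : p + -1 + q = 0
  swap
  · exact hψ.apply_E_of_add_ne_zero p (-1) q hpq
  obtain rfl : p = 1 - q := by omega
  rcases le_or_gt 2 q with hq | hq
  · rw [hψ.apply_E_one_sub_E_neg_one_E hV hq, hg, mul_zero]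
  rcases le_or_gt q (-1) with hq' | hq'
  · have h := hψ.apply_E_one_sub_E_neg_one_E hV (n := 1 - q) (by omega)
    rw [sub_sub_cancel] at h
    rw [map_three_swap_outer, h, hg, mul_zero, neg_zero]
  obtain rfl | rfl : q = 0 ∨ q = 1 := by omega
  · rw [← map_three_rotate]
    exact hψ.apply_E_E_E_one _ _
  · exact hψ.apply_E_E_E_one _ _

theorem apply_eq_zero_of_natAbs_le_one (hV : IsVirasoroAlgebra K E t)
    (hψ : IsNormalizedVirasoroCocycle K E t ψ) [CharZero K] {p q r : ℤ}
    (h : p.natAbs ≤ 1 ∨ q.natAbs ≤ 1 ∨ r.natAbs ≤ 1) : ψ ![E p, E q, E r] = 0 := by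
  have middle : ∀ i j k : ℤ, j.natAbs ≤ 1 → ψ ![E i, E j, E k] = 0 := by
    intro i j k hj
    obtain rfl | rfl | rfl : j = -1 ∨ j = 0 ∨ j = 1 := by omega
    · exact hψ.apply_E_neg_one_E_eq_zero hV i k
    · exact hψ.apply_E_zero_E_eq_zero hV i k
    · rw [map_three_swap_right, hψ.apply_E_E_E_one, neg_zero]
  rcases h with h | h | h
  · rw [map_three_rotate]; exact middle r p q h
  · exact middle p q r h
  · rw [← map_three_rotate]; exact middle q r p h

theorem apply_E_min_eq_zero (hV : IsVirasoroAlgebra K E t)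
    (hψ : IsNormalizedVirasoroCocycle K E t ψ) [CharZero K] {m : ℤ} (hm : m ≤ -3)
    (ih : ∀ p q r : ℤ, m < p → m < q → m < r → ψ ![E p, E q, E r] = 0) {x y : ℤ}
    (hx : m ≤ x) (hy : m ≤ y) : ψ ![E m, E x, E y] = 0 := by
  have far : ∀ u v : ℤ, m + 2 ≤ u → m + 2 ≤ v → ψ ![E m, E u, E v] = 0 := by
    intro u v hu hv
    have key := hψ.wittSum_eq_zero hV (m + 1) u v (l := -1) (by decide)
    have neg_one (i j : ℤ) : ψ ![E i, E j, E (-1)] = 0 :=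
      hψ.apply_eq_zero_of_natAbs_le_one hV (by omega)
    simp only [wittSum, neg_one, show m + 1 + -1 = m by ring,
      ih (u + -1) (m + 1) v (by omega) (by omega) (by omega),
      ih (v + -1) (m + 1) u (by omega) (by omega) (by omega)] at key
    have hm₂ : (m + 2 : K) ≠ 0 := by exact_mod_cast (by omega : m + 2 ≠ 0)
    refine (mul_eq_zero.1 ?_).resolve_left hm₂
    push_cast at key
    linear_combination -key
  have adjacent : ψ ![E m, E (m + 1), E (-2 * m - 1)] = 0 := by
    have key := hψ.wittSum_eq_zero hV (-2 * m - 2) m (m + 1) (l := 1) (by decide)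
    have hfar := far (m + 2) (-2 * m - 2) (by omega) (by omega)
    simp only [wittSum] at key
    have hm₃ : (2 * m + 3 : K) ≠ 0 := by exact_mod_cast (by omega : 2 * m + 3 ≠ 0)
    refine (mul_eq_zero.1 ?_).resolve_left hm₃
    grind [map_three_swap_left, map_three_swap_right, map_three_rotate, map_three_self_outer,
      hψ.apply_E_E_E_one]
  by_cases hsum : m + x + y = 0
  swap
  · exact hψ.apply_E_of_add_ne_zero m x y hsum
  rcases hx.eq_or_lt with rfl | hx
  · exact map_three_self_left _ _ _
  rcases hy.eq_or_lt with rfl | hy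
  · exact map_three_self_outer _ _ _
  rcases (Int.add_one_le_of_lt hx).eq_or_lt with rfl | hx'
  · obtain rfl : y = -2 * m - 1 := by omega
    exact adjacent
  rcases (Int.add_one_le_of_lt hy).eq_or_lt with rfl | hy'
  · obtain rfl : x = -2 * m - 1 := by omega
    rw [map_three_swap_right, adjacent, neg_zero]
  exact far x y (by omega) (by omega)

theorem apply_eq_zero_of_le (hV : IsVirasoroAlgebra K E t)
    (hψ : IsNormalizedVirasoroCocycle K E t ψ) [CharZero K] {m : ℤ} (hm : m ≤ -2) :
    ∀ p q r : ℤ, m ≤ p → m ≤ q → m ≤ r → ψ ![E p, E q, E r] = 0 := by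
  induction m, hm using Int.leInductionDown with
  | base =>
    intro p q r hp hq hr
    by_cases hsum : p + q + r = 0
    swap
    · exact hψ.apply_E_of_add_ne_zero p q r hsum
    have : (p.natAbs ≤ 1 ∨ q.natAbs ≤ 1 ∨ r.natAbs ≤ 1) ∨ p = q ∨ q = r ∨ p = r := by omega
    rcases this with h | rfl | rfl | rfl
    · exact hψ.apply_eq_zero_of_natAbs_le_one hV h
    · exact map_three_self_left _ _ _
    · exact map_three_self_right _ _ _
    · exact map_three_self_outer _ _ _
  | pred m hm ih =>
    intro p q r hp hq hr
    have ih' (p q r : ℤ) (hp : m - 1 < p) (hq : m - 1 < q) (hr : m - 1 < r) :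
        ψ ![E p, E q, E r] = 0 :=
      ih p q r (by omega) (by omega) (by omega)
    have hm₃ : m - 1 ≤ -3 := by omega
    by_cases hp' : p = m - 1
    · subst hp'
      exact hψ.apply_E_min_eq_zero hV hm₃ ih' hq hr
    by_cases hq' : q = m - 1
    · subst hq'
      rw [map_three_swap_left, hψ.apply_E_min_eq_zero hV hm₃ ih' hp hr, neg_zero]
    by_cases hr' : r = m - 1
    · subst hr'
      rw [map_three_rotate]
      exact hψ.apply_E_min_eq_zero hV hm₃ ih' hp hq
    exact ih' p q r (by omega) (by omega) (by omega)

theorem apply_E_E_E_eq_zero (hV : IsVirasoroAlgebra K E t)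
    (hψ : IsNormalizedVirasoroCocycle K E t ψ) [CharZero K] (i j k : ℤ) :
    ψ ![E i, E j, E k] = 0 :=
  hψ.apply_eq_zero_of_le hV (m := min (-2) (min i (min j k))) (by omega) i j k
    (by omega) (by omega) (by omega)

end IsNormalizedVirasoroCocycle

end Virasoro

theorem virasoro_cocycle_level_one_zero_is_zero_general
    {K V : Type*} [Field K] [CharZero K] [LieRing V] [LieAlgebra K V]
    (E : ℤ → V) (t : V) (hV : IsVirasoroAlgebra K E t)
    (ψ : AlternatingMap K V K (Fin 3)) (hcoc : IsLieCocycle3 K ψ)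
    (hdeg : ∀ i j k : ℤ, i + j + k ≠ 0 → ψ ![E i, E j, E k] = 0)
    (h1 : ∀ i j : ℤ, ψ ![E i, E j, E 1] = 0)
    (hc : ∀ i j : ℤ, ψ ![E i, E j, t] =
      (if i = -j then (((i : K) - 1) * (i : K) * ((i : K) + 1)) / 6 else 0) *
        ψ ![E 2, E (-2), t]) :
    (∀ i j k : ℤ, ψ ![E i, E j, E k] = 0) ∧ (∀ i j : ℤ, ψ ![E i, E j, t] = 0) := by
  have hψ : IsNormalizedVirasoroCocycle K E t ψ := ⟨hcoc, hdeg, h1, hc⟩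
  exact ⟨hψ.apply_E_E_E_eq_zero hV, hψ.apply_E_E_t_eq_zero hV⟩

/-- a degree-zero 3-cocycle `ψ` of the Virasoro algebra with values in the
trivial module `K` with `ψ(ê i, ê j, ê 1) = 0` for all `i, j` and
`ψ(ê i, ê j, t) = δ_{i,-j} (1/6)(i-1)i(i+1) ψ(ê 2, ê₋₂, t)` vanishes identically. -/
theorem virasoro_cocycle_level_one_zero_is_zero
    {K V : Type*} [Field K] [CharZero K] [LieRing V] [LieAlgebra K V]
    (E : ℤ → V) (t : V) (hV : IsVirasoroAlgebra K E t)
    (ψ : AlternatingMap K V K (Fin 3)) (hcoc : IsLieCocycle3 K ψ)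
    (hdeg : ∀ i j k : ℤ, i + j + k ≠ 0 → ψ ![E i, E j, E k] = 0)
    (hdegt : ∀ i j : ℤ, i + j ≠ 0 → ψ ![E i, E j, t] = 0)
    (h1 : ∀ i j : ℤ, ψ ![E i, E j, E 1] = 0)
    (hc : ∀ i j : ℤ, ψ ![E i, E j, t] =
      (if i = -j then (((i : K) - 1) * (i : K) * ((i : K) + 1)) / 6 else 0) *
        ψ ![E 2, E (-2), t]) :
    (∀ i j k : ℤ, ψ ![E i, E j, E k] = 0) ∧ (∀ i j : ℤ, ψ ![E i, E j, t] = 0) :=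
  virasoro_cocycle_level_one_zero_is_zero_general E t hV ψ hcoc hdeg h1 hc
end

section
/- Let ψ be a 3-cocycle of the Virasoro algebra V with values in the trivial module K that is homogeneous of degree zero and satisfies ψ(ê_{−1}, ê_1, t) = 0. Then for all k ∈ ℤ, ψ(ê_k, ê_{−k}, t) = (1/6)(k − 1) k (k + 1) · ψ(ê_2, ê_{−2}, t). -/
theorem AlternatingMap.map_vec3_swap_first_two {R M N : Type*} [CommSemiring R]
    [AddCommMonoid M] [Module R M] [AddCommGroup N] [Module R N] (ψ : M [⋀^Fin 3]→ₗ[R] N)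
    (x y z : M) : ψ ![y, x, z] = -ψ ![x, y, z] := by
  rw [← ψ.map_swap _ (i := 0) (j := 1) (by decide)]
  congr 1
  ext i
  fin_cases i <;> rfl

theorem AlternatingMap.map_vec3_add_smul_last {R M N : Type*} [CommSemiring R]
    [AddCommMonoid M] [Module R M] [AddCommGroup N] [Module R N] (ψ : M [⋀^Fin 3]→ₗ[R] N)
    (x y z : M) (c : R) : ψ ![x + c • z, y, z] = ψ ![x, y, z] := by
  have hadd : ψ ![x + c • z, y, z] = ψ ![x, y, z] + c • ψ ![z, y, z] :=
    (ψ.toMultilinearMap.cons_add ![y, z] x (c • z)).trans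
      (congrArg _ (ψ.toMultilinearMap.cons_smul ![y, z] c z))
  rw [hadd, ψ.map_eq_zero_of_eq ![z, y, z] (i := 0) (j := 2) rfl (by decide), smul_zero,
    add_zero]

theorem eq_cubic_mul_of_recursion {K : Type*} [Field K] [CharZero K] (c : ℤ → K)
    (hrec : ∀ k : ℤ, ((k : K) - 1) * c (k + 1) = ((k : K) + 2) * c k)
    (hodd : ∀ k : ℤ, c (-k) = -c k) (k : ℤ) :
    c k = (((k : K) - 1) * (k : K) * ((k : K) + 1) / 6) * c 2 := by
  have h0 : c 0 = 0 := self_eq_neg.mp (by simpa using hodd 0)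
  have hnonneg : ∀ k : ℤ, 0 ≤ k → c k = (((k : K) - 1) * (k : K) * ((k : K) + 1) / 6) * c 2 := by
    intro k hk
    induction k, hk using Int.leInduction with
    | base => simp [h0]
    | succ k _ ih =>
      rcases eq_or_ne k 1 with rfl | hk1
      · norm_num
      · have hk1' : (k : K) - 1 ≠ 0 := sub_ne_zero.mpr (by exact_mod_cast hk1)
        apply mul_left_cancel₀ hk1'
        rw [hrec, ih]
        push_cast
        ring
  rcases le_or_gt 0 k with hk | hk
  · exact hnonneg k hk
  · rw [← neg_neg k, hodd, hnonneg (-k) (by omega)]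
    push_cast
    ring

section Cocycle

variable {K L : Type*} [Field K] [LieRing L] [LieAlgebra K L]

/-- Contracting with `z` turns a 3-cocycle into a 2-cocycle on elements commuting with `z`. -/
theorem IsLieCocycle3.contract {ψ : AlternatingMap K L K (Fin 3)} (hψ : IsLieCocycle3 K ψ)
    {x y w z : L} (hx : ⁅x, z⁆ = 0) (hy : ⁅y, z⁆ = 0) (hw : ⁅w, z⁆ = 0) :
    ψ ![⁅x, y⁆, w, z] - ψ ![⁅x, w⁆, y, z] + ψ ![⁅y, w⁆, x, z] = 0 := by
  have hzero : ∀ u v : L, ψ ![0, u, v] = 0 := fun u v => ψ.map_coord_zero 0 rfl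
  simpa [hx, hy, hw, hzero] using hψ x y w z

end Cocycle

namespace IsVirasoroAlgebra

variable {K V : Type*} [Field K] [LieRing V] [LieAlgebra K V] {E : ℤ → V} {t : V}

theorem cochain_bracket (hV : IsVirasoroAlgebra K E t) (ψ : AlternatingMap K V K (Fin 3))
    (n m : ℤ) (w : V) : ψ ![⁅E n, E m⁆, w, t] = ((m : K) - n) * ψ ![E (n + m), w, t] := by
  have hzsmul : ((m - n : ℤ) • E (n + m) : V) = ((m : K) - n) • E (n + m) := by
    rw [← Int.cast_smul_eq_zsmul K]
    push_cast
    rfl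
  rw [hV.2.1 n m, ψ.map_vec3_add_smul_last, hzsmul]
  exact ψ.toMultilinearMap.cons_smul ![w, t] _ _

theorem central_coeff_recursion (hV : IsVirasoroAlgebra K E t)
    {ψ : AlternatingMap K V K (Fin 3)} (hψ : IsLieCocycle3 K ψ)
    (h0 : ψ ![E (-1), E 1, t] = 0) (k : ℤ) :
    ((k : K) - 1) * ψ ![E (k + 1), E (-(k + 1)), t] = ((k : K) + 2) * ψ ![E k, E (-k), t] := by
  have h := hψ.contract (hV.2.2 k) (hV.2.2 1) (hV.2.2 (-(k + 1)))
  rw [hV.cochain_bracket, hV.cochain_bracket, hV.cochain_bracket,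
    show k + -(k + 1) = -1 by ring, show 1 + -(k + 1) = -k by ring, h0,
    ψ.map_vec3_swap_first_two (E k)] at h
  push_cast at h
  linear_combination -h

end IsVirasoroAlgebra

theorem virasoro_central_coefficients_recursion_general
    {K V : Type*} [Field K] [CharZero K] [LieRing V] [LieAlgebra K V]
    (E : ℤ → V) (t : V) (hV : IsVirasoroAlgebra K E t)
    (ψ : AlternatingMap K V K (Fin 3)) (hcoc : IsLieCocycle3 K ψ)
    (h0 : ψ ![E (-1), E 1, t] = 0) :
    ∀ k : ℤ, ψ ![E k, E (-k), t] =
      (((k : K) - 1) * (k : K) * ((k : K) + 1) / 6) * ψ ![E 2, E (-2), t] :=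
  eq_cubic_mul_of_recursion (fun k => ψ ![E k, E (-k), t])
    (hV.central_coeff_recursion hcoc h0)
    (fun k => by simpa using ψ.map_vec3_swap_first_two (E k) (E (-k)) t)

/-- for a degree-zero 3-cocycle `ψ` of the Virasoro algebra with values in
the trivial module `K` satisfying `ψ(ê₋₁, ê₁, t) = 0`, the central coefficients satisfy
`ψ(ê k, ê₋ₖ, t) = (1/6)(k-1)k(k+1) ψ(ê 2, ê₋₂, t)`. -/
theorem virasoro_central_coefficients_recursion
    {K V : Type*} [Field K] [CharZero K] [LieRing V] [LieAlgebra K V]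
    (E : ℤ → V) (t : V) (hV : IsVirasoroAlgebra K E t)
    (ψ : AlternatingMap K V K (Fin 3)) (hcoc : IsLieCocycle3 K ψ)
    (hdeg : ∀ i j k : ℤ, i + j + k ≠ 0 → ψ ![E i, E j, E k] = 0)
    (hdegt : ∀ i j : ℤ, i + j ≠ 0 → ψ ![E i, E j, t] = 0)
    (h0 : ψ ![E (-1), E 1, t] = 0) :
    ∀ k : ℤ, ψ ![E k, E (-k), t] =
      (((k : K) - 1) * (k : K) * ((k : K) + 1) / 6) * ψ ![E 2, E (-2), t] :=
  virasoro_central_coefficients_recursion_general E t hV ψ hcoc h0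
end

section
/- Let ψ be a 3-cocycle of the Witt algebra W with values in the trivial module K that is homogeneous of degree zero and satisfies ψ(e_i, e_j, e_1) = 0 for all i, j ∈ ℤ. Then for all k ∈ ℤ, ψ(e_{−k}, e_k, e_0) = (1/6)(k − 1) k (k + 1) · ψ(e_{−2}, e_2, e_0). -/
namespace AlternatingMap

variable {R M N : Type*} [CommSemiring R] [AddCommGroup N] [Module R N]

section AddCommMonoid

variable [AddCommMonoid M] [Module R M] (ψ : M [⋀^Fin 3]→ₗ[R] N)

theorem fin3_swap_01 (x y w : M) : ψ ![x, y, w] = -ψ ![y, x, w] := by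
  have h := ψ.map_swap ![y, x, w] (by decide : (0 : Fin 3) ≠ 1)
  rwa [show ![y, x, w] ∘ Equiv.swap (0 : Fin 3) 1 = ![x, y, w] by
    funext i; fin_cases i <;> rfl] at h

theorem fin3_swap_12 (x y w : M) : ψ ![x, y, w] = -ψ ![x, w, y] := by
  have h := ψ.map_swap ![x, w, y] (by decide : (1 : Fin 3) ≠ 2)
  rwa [show ![x, w, y] ∘ Equiv.swap (1 : Fin 3) 2 = ![x, y, w] by
    funext i; fin_cases i <;> rfl] at h

end AddCommMonoid

theorem fin3_zsmul_0 [AddCommGroup M] [Module R M] (ψ : M [⋀^Fin 3]→ₗ[R] N) (z : ℤ)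
    (x y w : M) : ψ ![z • x, y, w] = z • ψ ![x, y, w] := by
  have h := map_zsmul (ψ.toMultilinearMap.toLinearMap ![x, y, w] 0) z x
  simp only [MultilinearMap.toLinearMap_apply, Matrix.vecCons, Fin.update_cons_zero] at h
  exact h

end AlternatingMap

/-- The recursion leaves `f 2` free (its coefficient vanishes at `k = 2`) and does not link
negative to positive indices (the coefficient of `f (-2)` vanishes at `k = -1`); oddness does. -/
theorem eq_cubic_mul_of_odd_of_recursion {K : Type*} [Field K] [CharZero K] {f : ℤ → K}
    (hodd : ∀ k, f (-k) = -f k)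
    (hrec : ∀ k : ℤ, ((k : K) - 2) * f k = ((k : K) + 1) * f (k - 1)) (k : ℤ) :
    f k = ((k : K) - 1) * k * (k + 1) / 6 * f 2 := by
  have hnat : ∀ n : ℕ, f n = ((n : K) - 1) * n * (n + 1) / 6 * f 2 := by
    intro n
    induction n with
    | zero => simpa using self_eq_neg.mp (by simpa using hodd 0)
    | succ n ih =>
      have h := hrec (n + 1)
      push_cast at h ⊢
      rw [add_sub_cancel_right, ih] at h
      rcases eq_or_ne n 1 with rfl | hn
      · norm_num
      · have hn' : (n : K) - 1 ≠ 0 := sub_ne_zero.mpr (by exact_mod_cast hn)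
        apply mul_left_cancel₀ hn'
        linear_combination h
  obtain ⟨n, rfl | rfl⟩ := k.eq_nat_or_neg
  · exact_mod_cast hnat n
  · rw [hodd, hnat]
    push_cast
    ring

section Witt

variable {K W : Type*} [Field K] [LieRing W] [LieAlgebra K W] {e : ℤ → W}
  {ψ : W [⋀^Fin 3]→ₗ[K] K}

theorem level_zero_recursion (he : ∀ n m : ℤ, ⁅e n, e m⁆ = (m - n) • e (n + m))
    (hcoc : IsLieCocycle3 K ψ) (h1 : ∀ i j : ℤ, ψ ![e i, e j, e 1] = 0) (k : ℤ) :
    ((k : K) - 2) * ψ ![e (-k), e k, e 0] =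
      ((k : K) + 1) * ψ ![e (-(k - 1)), e (k - 1), e 0] := by
  have H := hcoc (e (-k)) (e (k - 1)) (e 1) (e 0)
  simp only [he, AlternatingMap.fin3_zsmul_0, zsmul_eq_mul] at H
  rw [show -k + (k - 1) = -1 by ring, show -k + 1 = -(k - 1) by ring, add_zero, add_zero,
    sub_add_cancel, add_zero] at H
  have h_neg_one : ψ ![e (-1), e 1, e 0] = 0 := by
    rw [AlternatingMap.fin3_swap_12, h1, neg_zero]
  have h_one : ψ ![e 1, e (-k), e (k - 1)] = 0 := by
    rw [AlternatingMap.fin3_swap_01, AlternatingMap.fin3_swap_12, h1, neg_zero, neg_zero]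
  rw [h_neg_one, h1, h1, h_one, AlternatingMap.fin3_swap_01 _ (e k)] at H
  push_cast at H
  linear_combination H

end Witt

theorem witt_cocycle_level_zero_recursion_general
    {K W : Type*} [Field K] [CharZero K] [LieRing W] [LieAlgebra K W]
    (e : ℤ → W) (hW : IsWittAlgebra K e)
    (ψ : AlternatingMap K W K (Fin 3)) (hcoc : IsLieCocycle3 K ψ)
    (h1 : ∀ i j : ℤ, ψ ![e i, e j, e 1] = 0) :
    ∀ k : ℤ, ψ ![e (-k), e k, e 0] =
      (((k : K) - 1) * (k : K) * ((k : K) + 1) / 6) * ψ ![e (-2), e 2, e 0] := by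
  refine eq_cubic_mul_of_odd_of_recursion (f := fun k ↦ ψ ![e (-k), e k, e 0])
    (fun k ↦ ?_) (level_zero_recursion hW.2 hcoc h1)
  simpa only [neg_neg] using ψ.fin3_swap_01 (e k) (e (-k)) (e 0)

/-- for a degree-zero 3-cocycle `ψ` of the Witt algebra with values in the
trivial module `K` with `ψ(e i, e j, e 1) = 0` for all `i, j`, the level-zero coefficients
satisfy `ψ(e₋ₖ, eₖ, e₀) = (1/6)(k-1)k(k+1) ψ(e₋₂, e₂, e₀)`. -/
theorem witt_cocycle_level_zero_recursion
    {K W : Type*} [Field K] [CharZero K] [LieRing W] [LieAlgebra K W]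
    (e : ℤ → W) (hW : IsWittAlgebra K e)
    (ψ : AlternatingMap K W K (Fin 3)) (hcoc : IsLieCocycle3 K ψ)
    (hdeg : ∀ i j k : ℤ, i + j + k ≠ 0 → ψ ![e i, e j, e k] = 0)
    (h1 : ∀ i j : ℤ, ψ ![e i, e j, e 1] = 0) :
    ∀ k : ℤ, ψ ![e (-k), e k, e 0] =
      (((k : K) - 1) * (k : K) * ((k : K) + 1) / 6) * ψ ![e (-2), e 2, e 0] :=
  witt_cocycle_level_zero_recursion_general e hW ψ hcoc h1
end
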